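/- arXiv:0901.0885 — 10 statements merged into one kernel-verified Lean document; each statement's English description precedes it below -/
import Mathlib

section
/- If [A | a] and [b ; B] are totally unimodular matrices (where a is a column of A's block and b is a row of B's block), then their 2-sum [[A, ab], [0, B]] is totally unimodular, where ab denotes the outer product of column vector a and row vector b. -/
/-!
A square submatrix of a 2-sum is the 2-sum of submatrices `[X | u]` and `[v ; Y]` of the two
factors, so it suffices to treat a square 2-sum `[[X, uv], [0, Y]]` whose top blocks have `r` rows
and `c` columns. If `r < c`, the columns through `X` are dependent. If `r > c + 1`, the rows of
`[X | u]` are dependent, and so are the top `r` rows, whose entries right of `X` are multiples of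
`u`. If `r = c`, the matrix is block triangular with determinant `det X * det Y`. If `r = c + 1`,
it factors as `[[X, u, 0], [0, 0, 1]] * [[1, 0], [0, v], [0, Y]]`, and up to reordering the two
factors are block diagonal with square blocks `[X | u]`, `1` and `1`, `[v ; Y]`.
-/

/-- A real matrix is totally unimodular if every square submatrix has determinant 0, +1 or -1. -/
def IsTU {m n : Type*} (A : Matrix m n ℝ) : Prop :=
  ∀ (k : ℕ) (f : Fin k → m) (g : Fin k → n), Function.Injective f → Function.Injective g →
    (A.submatrix f g).det ∈ ({0, 1, -1} : Set ℝ)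

open Matrix

theorem Sum.exists_eq_map_comp_sumCompl_symm {ι α β : Type*} (f : ι → α ⊕ β) :
    ∃ (f₁ : {i // (f i).isLeft} → α) (f₂ : {i // ¬(f i).isLeft} → β),
      f = Sum.map f₁ f₂ ∘ (Equiv.sumCompl fun i => (f i).isLeft).symm := by
  refine ⟨fun i => (f i).getLeft i.2, fun i => (f i).getRight (Sum.not_isLeft.mp i.2), ?_⟩
  funext i
  by_cases h : (f i).isLeft
  · rw [Function.comp_apply, Equiv.sumCompl_symm_apply_of_pos (p := fun i => (f i).isLeft) h,
      Sum.map_inl, Sum.inl_getLeft]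
  · rw [Function.comp_apply, Equiv.sumCompl_symm_apply_of_neg (p := fun i => (f i).isLeft) h,
      Sum.map_inr, Sum.inr_getRight]

theorem mul_mem_range_signType_cast {R : Type*} [CommRing R] {x y : R}
    (hx : x ∈ Set.range SignType.cast) (hy : y ∈ Set.range SignType.cast) :
    x * y ∈ Set.range (SignType.cast : SignType → R) := by
  obtain ⟨s, rfl⟩ := hx
  obtain ⟨t, rfl⟩ := hy
  exact ⟨s * t, SignType.coe_mul s t⟩

namespace Matrix

section Submatrix

variable {α l m n o l' m' n' o' : Type*}

theorem fromBlocks_submatrix_sumMap (A : Matrix n l α) (B : Matrix n m α) (C : Matrix o l α)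
    (D : Matrix o m α) (f₁ : n' → n) (f₂ : o' → o) (g₁ : l' → l) (g₂ : m' → m) :
    (fromBlocks A B C D).submatrix (Sum.map f₁ f₂) (Sum.map g₁ g₂) =
      fromBlocks (A.submatrix f₁ g₁) (B.submatrix f₁ g₂) (C.submatrix f₂ g₁)
        (D.submatrix f₂ g₂) := by
  ext (i | i) (j | j) <;> rfl

theorem fromCols_submatrix_sumMap (A : Matrix n l α) (B : Matrix n m α) (f : n' → n)
    (g₁ : l' → l) (g₂ : m' → m) :
    (fromCols A B).submatrix f (Sum.map g₁ g₂) =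
      fromCols (A.submatrix f g₁) (B.submatrix f g₂) := by
  ext i (j | j) <;> rfl

theorem fromRows_submatrix_sumMap (A : Matrix n l α) (B : Matrix o l α) (f₁ : n' → n)
    (f₂ : o' → o) (g : l' → l) :
    (fromRows A B).submatrix (Sum.map f₁ f₂) g =
      fromRows (A.submatrix f₁ g) (B.submatrix f₂ g) := by
  ext (i | i) j <;> rfl

end Submatrix

variable {ι ι' m n R K : Type*}

section Field

variable [Field K] [Fintype m] [Fintype n]

theorem exists_mulVec_eq_zero_of_card_lt (M : Matrix m n K) (h : Fintype.card m < Fintype.card n) :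
    ∃ v ≠ 0, M *ᵥ v = 0 := by
  by_contra! hM
  have hinj : Function.Injective M.mulVecLin :=
    (injective_iff_map_eq_zero _).mpr fun v hv => by_contra fun hv0 => hM v hv0 hv
  have := LinearMap.finrank_le_finrank_of_injective hinj
  simp only [Module.finrank_fintype_fun_eq_card] at this
  omega

theorem exists_vecMul_eq_zero_of_card_lt (M : Matrix m n K) (h : Fintype.card n < Fintype.card m) :
    ∃ v ≠ 0, v ᵥ* M = 0 := by
  simpa only [← mulVec_transpose] using Mᵀ.exists_mulVec_eq_zero_of_card_lt h

end Field

section CommRing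

variable [CommRing R] [Fintype ι] [DecidableEq ι] [Fintype ι'] [DecidableEq ι']

theorem det_submatrix_equiv_mem_range_signType_cast {M : Matrix m n R} {e₁ : ι ≃ m} {e₂ : ι ≃ n}
    (e₁' : ι' ≃ m) (e₂' : ι' ≃ n) (h : (M.submatrix e₁' e₂').det ∈ Set.range SignType.cast) :
    (M.submatrix e₁ e₂).det ∈ Set.range SignType.cast := by
  set σ : Equiv.Perm ι' := (e₂.trans e₂'.symm).symm.trans (e₁.trans e₁'.symm)
  have hM : M.submatrix e₁ e₂ =
      ((M.submatrix e₁' e₂').submatrix σ id).submatrix (e₂.trans e₂'.symm) (e₂.trans e₂'.symm) := by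
    ext i j
    simp [σ]
  obtain ⟨s, hs⟩ := h
  rw [hM, det_submatrix_equiv_self, det_permute, ← hs]
  rcases Int.units_eq_one_or (Equiv.Perm.sign σ) with hσ | hσ
  · exact ⟨s, by simp [hσ]⟩
  · exact ⟨-s, by simp [hσ]⟩

variable [IsDomain R]

theorem det_submatrix_equiv_eq_zero_of_mulVec_eq_zero [Fintype n] {M : Matrix m n R}
    (e₁ : ι ≃ m) (e₂ : ι ≃ n) {v : n → R} (hv : v ≠ 0) (hMv : M *ᵥ v = 0) :
    (M.submatrix e₁ e₂).det = 0 := by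
  refine exists_mulVec_eq_zero_iff.mp ⟨v ∘ e₂, fun h => hv ?_, ?_⟩
  · simpa [Function.comp_assoc] using congrArg (· ∘ e₂.symm) h
  · rw [submatrix_mulVec_equiv, Function.comp_assoc, e₂.self_comp_symm, Function.comp_id, hMv]
    rfl

theorem det_submatrix_equiv_eq_zero_of_vecMul_eq_zero [Fintype m] {M : Matrix m n R}
    (e₁ : ι ≃ m) (e₂ : ι ≃ n) {v : m → R} (hv : v ≠ 0) (hvM : v ᵥ* M = 0) :
    (M.submatrix e₁ e₂).det = 0 := by
  rw [← det_transpose, transpose_submatrix]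
  exact det_submatrix_equiv_eq_zero_of_mulVec_eq_zero e₂ e₁ hv (by rwa [mulVec_transpose])

end CommRing

section TwoSum

variable [Field K] {R₁ R₂ C₁ C₂ : Type*} [Fintype ι] [DecidableEq ι] [Fintype R₁] [Fintype C₁]

theorem det_fromBlocks_zero₂₁_submatrix_eq_zero_of_card_lt [Fintype C₂] (X : Matrix R₁ C₁ K)
    (B : Matrix R₁ C₂ K) (Y : Matrix R₂ C₂ K) (e₁ : ι ≃ R₁ ⊕ R₂) (e₂ : ι ≃ C₁ ⊕ C₂)
    (h : Fintype.card R₁ < Fintype.card C₁) : ((fromBlocks X B 0 Y).submatrix e₁ e₂).det = 0 := by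
  obtain ⟨c, hc, hXc⟩ := X.exists_mulVec_eq_zero_of_card_lt h
  refine det_submatrix_equiv_eq_zero_of_mulVec_eq_zero e₁ e₂ (v := Sum.elim c 0) ?_ ?_
  · exact fun h0 => hc (by simpa using congrArg (· ∘ Sum.inl) h0)
  · simp [fromBlocks_mulVec, hXc]

theorem det_twoSum_submatrix_eq_zero_of_card_lt [Fintype R₂] (X : Matrix R₁ C₁ K) (u : R₁ → K)
    (Y : Matrix R₂ C₂ K) (v : C₂ → K) (e₁ : ι ≃ R₁ ⊕ R₂) (e₂ : ι ≃ C₁ ⊕ C₂)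
    (h : Fintype.card C₁ + 1 < Fintype.card R₁) :
    ((fromBlocks X (vecMulVec u v) 0 Y).submatrix e₁ e₂).det = 0 := by
  obtain ⟨w, hw, hwXu⟩ := (fromCols X (replicateCol Unit u)).exists_vecMul_eq_zero_of_card_lt
    (by simpa using h)
  have hwX : w ᵥ* X = 0 := by simpa using congrArg (· ∘ Sum.inl) hwXu
  have hwu : w ⬝ᵥ u = 0 := congrFun hwXu (Sum.inr ())
  refine det_submatrix_equiv_eq_zero_of_vecMul_eq_zero e₁ e₂ (v := Sum.elim w 0) ?_ ?_
  · exact fun h0 => hw (by simpa using congrArg (· ∘ Sum.inl) h0)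
  · simp [vecMul_fromBlocks, hwX, vecMul_vecMulVec, hwu]

theorem det_fromBlocks_zero₂₁_submatrix_mem_of_card_eq [Fintype R₂] [Fintype C₂]
    [DecidableEq R₁] [DecidableEq R₂] {X : Matrix R₁ C₁ K} {Y : Matrix R₂ C₂ K}
    (hX : X.IsTotallyUnimodular) (hY : Y.IsTotallyUnimodular) (B : Matrix R₁ C₂ K)
    (e₁ : ι ≃ R₁ ⊕ R₂) (e₂ : ι ≃ C₁ ⊕ C₂) (h : Fintype.card R₁ = Fintype.card C₁) :
    ((fromBlocks X B 0 Y).submatrix e₁ e₂).det ∈ Set.range SignType.cast := by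
  have h₂ : Fintype.card R₂ = Fintype.card C₂ := by
    have := Fintype.card_congr (e₁.symm.trans e₂)
    simp only [Fintype.card_sum] at this
    omega
  set α := Fintype.equivOfCardEq h
  set β := Fintype.equivOfCardEq h₂
  refine det_submatrix_equiv_mem_range_signType_cast (Equiv.refl _) (Equiv.sumCongr α β) ?_
  have hblocks : (fromBlocks X B 0 Y).submatrix (Equiv.refl _) (Equiv.sumCongr α β) =
      fromBlocks (X.submatrix id α) (B.submatrix id β) 0 (Y.submatrix id β) := by
    ext (i | i) (j | j) <;> rfl
  rw [hblocks, det_fromBlocks_zero₂₁]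
  exact mul_mem_range_signType_cast ((isTotallyUnimodular_iff_fintype _).mp hX _ id α)
    ((isTotallyUnimodular_iff_fintype _).mp hY _ id β)

theorem det_twoSum_submatrix_mem_of_card_eq_add_one [Fintype R₂] [Fintype C₂]
    [DecidableEq R₁] [DecidableEq R₂] [DecidableEq C₁] {X : Matrix R₁ C₁ K} {u : R₁ → K}
    {Y : Matrix R₂ C₂ K} {v : C₂ → K} (hX : (fromCols X (replicateCol Unit u)).IsTotallyUnimodular)
    (hY : (fromRows (replicateRow Unit v) Y).IsTotallyUnimodular)
    (e₁ : ι ≃ R₁ ⊕ R₂) (e₂ : ι ≃ C₁ ⊕ C₂) (h : Fintype.card R₁ = Fintype.card C₁ + 1) :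
    ((fromBlocks X (vecMulVec u v) 0 Y).submatrix e₁ e₂).det ∈ Set.range SignType.cast := by
  have h₂ : Fintype.card (Unit ⊕ R₂) = Fintype.card C₂ := by
    have := Fintype.card_congr (e₁.symm.trans e₂)
    simp only [Fintype.card_sum, Fintype.card_unit] at this ⊢
    omega
  set α : R₁ ≃ C₁ ⊕ Unit := Fintype.equivOfCardEq (by simpa using h)
  set β := Fintype.equivOfCardEq h₂
  set S : Matrix (R₁ ⊕ R₂) ((C₁ ⊕ Unit) ⊕ R₂) K :=
    fromBlocks (fromCols X (replicateCol Unit u)) 0 0 1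
  set T : Matrix ((C₁ ⊕ Unit) ⊕ R₂) (C₁ ⊕ C₂) K :=
    fromBlocks (fromRows 1 0) (fromRows 0 (replicateRow Unit v)) 0 Y
  have hST : fromBlocks X (vecMulVec u v) 0 Y = S * T := by
    simp [S, T, fromBlocks_multiply, fromCols_mul_fromRows, vecMulVec_eq Unit]
  set σ := e₁.trans (Equiv.sumCongr α (Equiv.refl R₂))
  rw [hST, ← submatrix_mul_equiv S T e₁ σ e₂, det_mul]
  refine mul_mem_range_signType_cast ?_ ?_
  · refine det_submatrix_equiv_mem_range_signType_cast (Equiv.refl _)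
      (Equiv.sumCongr α (Equiv.refl _)) ?_
    have hblocks : S.submatrix (Equiv.refl _) (Equiv.sumCongr α (Equiv.refl _)) =
        fromBlocks ((fromCols X (replicateCol Unit u)).submatrix id α) 0 0 1 := by
      ext (i | i) (j | j) <;> rfl
    rw [hblocks, det_fromBlocks_zero₂₁, det_one, mul_one]
    exact (isTotallyUnimodular_iff_fintype _).mp hX _ id α
  · refine det_submatrix_equiv_mem_range_signType_cast (Equiv.sumAssoc C₁ Unit R₂).symm
      (Equiv.sumCongr (Equiv.refl _) β) ?_
    have hblocks : T.submatrix (Equiv.sumAssoc C₁ Unit R₂).symm (Equiv.sumCongr (Equiv.refl _) β) =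
        fromBlocks 1 0 0 ((fromRows (replicateRow Unit v) Y).submatrix id β) := by
      ext (i | i | i) (j | j) <;> rfl
    rw [hblocks, det_fromBlocks_zero₂₁, det_one, one_mul]
    exact (isTotallyUnimodular_iff_fintype _).mp hY _ id β

theorem det_twoSum_submatrix_mem [Fintype R₂] [Fintype C₂] [DecidableEq R₁] [DecidableEq R₂]
    [DecidableEq C₁] {X : Matrix R₁ C₁ K} {u : R₁ → K} {Y : Matrix R₂ C₂ K} {v : C₂ → K}
    (hX : (fromCols X (replicateCol Unit u)).IsTotallyUnimodular)
    (hY : (fromRows (replicateRow Unit v) Y).IsTotallyUnimodular)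
    (e₁ : ι ≃ R₁ ⊕ R₂) (e₂ : ι ≃ C₁ ⊕ C₂) :
    ((fromBlocks X (vecMulVec u v) 0 Y).submatrix e₁ e₂).det ∈ Set.range SignType.cast := by
  rcases lt_trichotomy (Fintype.card R₁) (Fintype.card C₁) with h | h | h
  · rw [det_fromBlocks_zero₂₁_submatrix_eq_zero_of_card_lt _ _ _ e₁ e₂ h]
    exact ⟨0, SignType.coe_zero⟩
  · exact det_fromBlocks_zero₂₁_submatrix_mem_of_card_eq (hX.submatrix id Sum.inl)
      (hY.submatrix Sum.inr id) _ e₁ e₂ h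
  · rcases (Nat.succ_le_of_lt h).eq_or_lt with h | h
    · exact det_twoSum_submatrix_mem_of_card_eq_add_one hX hY e₁ e₂ h.symm
    · rw [det_twoSum_submatrix_eq_zero_of_card_lt _ _ _ _ e₁ e₂ h]
      exact ⟨0, SignType.coe_zero⟩

theorem IsTotallyUnimodular.fromBlocks_vecMulVec {m₁ m₂ n₁ n₂ : Type*} {A : Matrix m₁ n₁ K}
    {a : m₁ → K} {B : Matrix m₂ n₂ K} {b : n₂ → K}
    (hA : (fromCols A (replicateCol Unit a)).IsTotallyUnimodular)
    (hB : (fromRows (replicateRow Unit b) B).IsTotallyUnimodular) :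
    (fromBlocks A (vecMulVec a b) 0 B).IsTotallyUnimodular := by
  classical
  rw [isTotallyUnimodular_iff]
  intro k f g
  obtain ⟨f₁, f₂, hf⟩ := Sum.exists_eq_map_comp_sumCompl_symm f
  obtain ⟨g₁, g₂, hg⟩ := Sum.exists_eq_map_comp_sumCompl_symm g
  rw [hf, hg, ← submatrix_submatrix, fromBlocks_submatrix_sumMap, submatrix_zero]
  refine det_twoSum_submatrix_mem ?_ ?_ _ _
  · have hA' := hA.submatrix f₁ (Sum.map g₁ id)
    rwa [fromCols_submatrix_sumMap] at hA'
  · have hB' := hB.submatrix (Sum.map id f₂) g₂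
    rwa [fromRows_submatrix_sumMap] at hB'

end TwoSum

end Matrix

theorem isTU_iff {m n : Type*} (A : Matrix m n ℝ) : IsTU A ↔ A.IsTotallyUnimodular := by
  have hrange : Set.range (SignType.cast : SignType → ℝ) = {0, 1, -1} := by
    simp [SignType.range_eq, Set.pair_comm]
  simp only [IsTU, IsTotallyUnimodular, hrange]

/-- The 2-sum of the totally unimodular matrices `[A | a]` and `[b ; B]` is the
totally unimodular matrix `[[A, ab], [0, B]]`, where `ab` is the outer product. -/
theorem twoSum_of_TU_is_TU {m₁ n₁ m₂ n₂ : Type*}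
    (A : Matrix m₁ n₁ ℝ) (a : m₁ → ℝ) (B : Matrix m₂ n₂ ℝ) (b : n₂ → ℝ)
    (hA : IsTU (Matrix.fromCols A (Matrix.replicateCol Unit a)))
    (hB : IsTU (Matrix.fromRows (Matrix.replicateRow Unit b) B)) :
    IsTU (Matrix.fromBlocks A (Matrix.vecMulVec a b) 0 B) := by
  rw [isTU_iff] at hA hB ⊢
  exact hA.fromBlocks_vecMulVec hB
end

section
/- Every network matrix is totally unimodular. -/
/-- The node-edge incidence matrix of a directed graph, given by its tail and head maps. -/
def digraphIncid {V E : Type*} [DecidableEq V] (tail head : E → V) : Matrix V E ℝ :=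
  Matrix.of fun v e =>
    if head e = tail e then 0
    else (if v = head e then 1 else 0) - (if v = tail e then 1 else 0)

lemma mem_S_mul {a b : ℝ} (ha : a ∈ ({0,1,-1} : Set ℝ)) (hb : b ∈ ({0,1,-1} : Set ℝ)) :
    a * b ∈ ({0,1,-1} : Set ℝ) := by
  simp only [Set.mem_insert_iff, Set.mem_singleton_iff] at *
  rcases ha with h|h|h <;> rcases hb with h'|h'|h' <;> subst h <;> subst h' <;> norm_num

lemma neg_one_pow_mem (n : ℕ) : ((-1 : ℝ)) ^ n ∈ ({0,1,-1} : Set ℝ) := by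
  rcases Nat.even_or_odd n with h | h
  · rw [h.neg_one_pow]; right; left; rfl
  · rw [h.neg_one_pow]; right; right; rfl

lemma incid_entry_mem {V E : Type*} [DecidableEq V] (tail head : E → V) (v : V) (e : E) :
    digraphIncid tail head v e ∈ ({0,1,-1} : Set ℝ) := by
  simp only [digraphIncid, Matrix.of_apply, Set.mem_insert_iff, Set.mem_singleton_iff]
  split_ifs <;> norm_num

/-- Column dichotomy: every column of a row-submatrix of the incidence matrix (with injective
row selection) has either at most one nonzero entry or entries summing to zero. -/
lemma incid_column_dichotomy {V E : Type*} [DecidableEq V] (tail head : E → V) {k : ℕ}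
    (f : Fin (k+1) → V) (hf : Function.Injective f) (e : E) :
    (∃ i0, ∀ i, i ≠ i0 → digraphIncid tail head (f i) e = 0) ∨
    (∑ i, digraphIncid tail head (f i) e = 0) := by
  classical
  by_cases hht : head e = tail e
  · right; simp [digraphIncid, hht]
  · by_cases hh : ∃ i, f i = head e
    · by_cases ht : ∃ i, f i = tail e
      · right
        obtain ⟨ih, hih⟩ := hh
        obtain ⟨it, hit⟩ := ht
        simp only [digraphIncid, Matrix.of_apply, if_neg hht]
        rw [Finset.sum_sub_distrib]
        have h1 : (∑ i, if f i = head e then (1:ℝ) else 0) = 1 := by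
          have : ∀ i : Fin (k+1), (if f i = head e then (1:ℝ) else 0)
              = if i = ih then (1:ℝ) else 0 := by
            intro i
            by_cases h : i = ih
            · subst h; simp [hih]
            · rw [if_neg h, if_neg]
              intro hc
              exact h (hf (hc.trans hih.symm))
          rw [Finset.sum_congr rfl fun i _ => this i]
          simp
        have h2 : (∑ i, if f i = tail e then (1:ℝ) else 0) = 1 := by
          have : ∀ i : Fin (k+1), (if f i = tail e then (1:ℝ) else 0)
              = if i = it then (1:ℝ) else 0 := by
            intro i
            by_cases h : i = it
            · subst h; simp [hit]
            · rw [if_neg h, if_neg]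
              intro hc
              exact h (hf (hc.trans hit.symm))
          rw [Finset.sum_congr rfl fun i _ => this i]
          simp
        rw [h1, h2, sub_self]
      · left
        obtain ⟨ih, hih⟩ := hh
        refine ⟨ih, fun i hi => ?_⟩
        simp only [digraphIncid, Matrix.of_apply, if_neg hht]
        rw [if_neg, if_neg, sub_self]
        · exact fun hc => ht ⟨i, hc⟩
        · exact fun hc => hi (hf (hc.trans hih.symm))
    · by_cases ht : ∃ i, f i = tail e
      · left
        obtain ⟨it, hit⟩ := ht
        refine ⟨it, fun i hi => ?_⟩
        simp only [digraphIncid, Matrix.of_apply, if_neg hht]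
        rw [if_neg, if_neg, sub_self]
        · exact fun hc => hi (hf (hc.trans hit.symm))
        · exact fun hc => hh ⟨i, hc⟩
      · right
        apply Finset.sum_eq_zero
        intro i _
        simp only [digraphIncid, Matrix.of_apply, if_neg hht]
        rw [if_neg (fun hc => hh ⟨i, hc⟩), if_neg (fun hc => ht ⟨i, hc⟩), sub_self]

/-- Every square submatrix (with possibly repeated rows/columns) of the incidence matrix has
determinant `0`, `1` or `-1`. -/
lemma incidTU_fin {V E : Type*} [DecidableEq V] (tail head : E → V) :
    ∀ (k : ℕ) (f : Fin k → V) (g : Fin k → E),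
      ((digraphIncid tail head).submatrix f g).det ∈ ({0,1,-1} : Set ℝ) := by
  intro k
  induction k with
  | zero =>
    intro f g
    rw [Matrix.det_fin_zero]
    right; left; rfl
  | succ k ih =>
    intro f g
    classical
    by_cases hf : Function.Injective f
    · set A := (digraphIncid tail head).submatrix f g with hA
      by_cases hcol : ∃ j0 i0, ∀ i, i ≠ i0 → A i j0 = 0
      · -- expand along column j0
        obtain ⟨j0, i0, h0⟩ := hcol
        rw [Matrix.det_succ_column A j0]
        rw [Finset.sum_eq_single i0]
        · have h1 : A i0 j0 ∈ ({0,1,-1} : Set ℝ) := incid_entry_mem tail head (f i0) (g j0)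
          have h2 : (A.submatrix i0.succAbove j0.succAbove).det ∈ ({0,1,-1} : Set ℝ) := by
            rw [hA, Matrix.submatrix_submatrix]
            exact ih _ _
          exact mem_S_mul (mem_S_mul (neg_one_pow_mem _) h1) h2
        · intro i _ hi
          rw [h0 i hi, mul_zero, zero_mul]
        · intro h; exact absurd (Finset.mem_univ i0) h
      · -- every column sums to zero
        left
        have hsum : ∀ j, ∑ i, A i j = 0 := by
          intro j
          rcases incid_column_dichotomy tail head f hf (g j) with h | h
          · exact absurd ⟨j, h⟩ hcol
          · exact h
        rw [← Matrix.det_transpose]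
        rw [← Matrix.exists_mulVec_eq_zero_iff]
        refine ⟨fun _ => 1, ?_, ?_⟩
        · intro h
          have := congrFun h 0
          simp at this
        · funext j
          simp only [Matrix.mulVec, dotProduct, Matrix.transpose_apply, mul_one,
            Pi.zero_apply]
          exact hsum j
    · -- repeated rows
      left
      rw [Function.not_injective_iff] at hf
      obtain ⟨i, j, hij, hne⟩ := hf
      refine Matrix.det_zero_of_row_eq hne ?_
      funext c
      simp [Matrix.submatrix_apply, hij]

/-- If all columns of `C` outside the range of an injective `f` are standard basis columns,
then `det C` equals the determinant of the square submatrix on `f`. -/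
lemma det_eq_det_submatrix {k : ℕ} {m : Type*} [Fintype m] [DecidableEq m]
    (C : Matrix m m ℝ) (f : Fin k → m) (hf : Function.Injective f)
    (hC : ∀ b, (¬ ∃ i, f i = b) → ∀ a, C a b = if a = b then 1 else 0) :
    C.det = (C.submatrix f f).det := by
  classical
  set p : m → Prop := fun b => ∃ i, f i = b with hp
  let e : {a // p a} ⊕ {a // ¬ p a} ≃ m := Equiv.sumCompl p
  have h1 : (C.submatrix e e).det = C.det := Matrix.det_submatrix_equiv_self e C
  have h2 : C.submatrix (e : _ → m) (e : _ → m) =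
      Matrix.fromBlocks
        (Matrix.of fun (i : {a // p a}) (j : {a // p a}) => C i.1 j.1) 0
        (Matrix.of fun (i : {a // ¬ p a}) (j : {a // p a}) => C i.1 j.1)
        (1 : Matrix {a // ¬ p a} {a // ¬ p a} ℝ) := by
    ext i j
    cases i with
    | inl i =>
      cases j with
      | inl j => simp [e, Matrix.fromBlocks]
      | inr j =>
        simp only [Matrix.submatrix_apply, Matrix.fromBlocks_apply₁₂, Matrix.zero_apply, e,
          Equiv.sumCompl_apply_inl, Equiv.sumCompl_apply_inr]
        rw [hC j.1 j.2 i.1, if_neg]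
        intro h
        exact j.2 (h ▸ i.2)
    | inr i =>
      cases j with
      | inl j => simp [e, Matrix.fromBlocks]
      | inr j =>
        simp only [Matrix.submatrix_apply, Matrix.fromBlocks_apply₂₂, e,
          Equiv.sumCompl_apply_inr]
        rw [hC j.1 j.2 i.1, Matrix.one_apply]
        by_cases h : i = j
        · subst h; simp
        · rw [if_neg h, if_neg (fun hc => h (Subtype.ext hc))]
  have h3 : C.det = (Matrix.of fun (i : {a // p a}) (j : {a // p a}) => C i.1 j.1).det := by
    rw [← h1, h2, Matrix.det_fromBlocks_zero₁₂, Matrix.det_one, mul_one]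
  rw [h3]
  -- identify the block with the submatrix via the equivalence given by f
  have hp' : ∀ a, p a ↔ a ∈ Set.range f := fun a => Iff.rfl
  let e2 : Fin k ≃ {a // p a} :=
    (Equiv.ofInjective f hf).trans (Equiv.subtypeEquivRight (fun a => (hp' a).symm))
  rw [← Matrix.det_submatrix_equiv_self e2]
  congr 1

/-- Every network matrix is totally unimodular.  Here `[R | S]` is the incidence matrix of a
directed graph on the node set `Option m` with the row of the node `none` deleted, `R` is an
invertible (basis) part, and the network matrix is `R⁻¹ * S`. -/
theorem networkMatrix_isTU {m n : Type*} [Fintype m] [DecidableEq m] [Fintype n]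
    (tail head : m ⊕ n → Option m) (R : Matrix m m ℝ) (S : Matrix m n ℝ)
    (hR : R = (digraphIncid tail head).submatrix some Sum.inl)
    (hS : S = (digraphIncid tail head).submatrix some Sum.inr)
    (hRdet : IsUnit R.det) :
    IsTU (R⁻¹ * S) := by
  classical
  intro k f g hf hg
  -- the matrix B: R with the columns f i replaced by the columns g i of S
  let colMap : m → m ⊕ n := fun b => if h : ∃ i, f i = b then Sum.inr (g h.choose) else Sum.inl b
  let B : Matrix m m ℝ := (digraphIncid tail head).submatrix some colMap
  have hBcol_in : ∀ (i : Fin k) (a : m), B a (f i) = S a (g i) := by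
    intro i a
    have h : ∃ i', f i' = f i := ⟨i, rfl⟩
    have hch : h.choose = i := hf h.choose_spec
    simp only [B, colMap, Matrix.submatrix_apply, dif_pos h, hch, hS]
  have hBcol_out : ∀ b, (¬ ∃ i, f i = b) → ∀ a, B a b = R a b := by
    intro b hb a
    simp only [B, colMap, Matrix.submatrix_apply, dif_neg hb, hR]
  have hRinv : R⁻¹ * R = 1 := Matrix.nonsing_inv_mul R hRdet
  have hCout : ∀ b, (¬ ∃ i, f i = b) → ∀ a, (R⁻¹ * B) a b = if a = b then 1 else 0 := by
    intro b hb a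
    have : (R⁻¹ * B) a b = (R⁻¹ * R) a b := by
      simp only [Matrix.mul_apply]
      exact Finset.sum_congr rfl fun c _ => by rw [hBcol_out b hb c]
    rw [this, hRinv, Matrix.one_apply]
  have hCsub : (R⁻¹ * B).submatrix f f = (R⁻¹ * S).submatrix f g := by
    ext i j
    simp only [Matrix.submatrix_apply, Matrix.mul_apply]
    exact Finset.sum_congr rfl fun c _ => by rw [hBcol_in j c]
  have hdet1 : (R⁻¹ * B).det = ((R⁻¹ * S).submatrix f g).det := by
    rw [← hCsub]
    exact det_eq_det_submatrix _ f hf hCout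
  -- B and R are submatrices of the incidence matrix, hence have small determinants
  let e := (Fintype.equivFin m).symm
  have hBdet : B.det ∈ ({0,1,-1} : Set ℝ) := by
    have := incidTU_fin tail head (Fintype.card m) (some ∘ e) (colMap ∘ e)
    rwa [show (digraphIncid tail head).submatrix (some ∘ e) (colMap ∘ e)
        = B.submatrix e e from (Matrix.submatrix_submatrix _ _ _ _ _).symm,
      Matrix.det_submatrix_equiv_self] at this
  have hRdetmem : R.det ∈ ({0,1,-1} : Set ℝ) := by
    have := incidTU_fin tail head (Fintype.card m) (some ∘ e) (Sum.inl ∘ e)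
    rwa [show (digraphIncid tail head).submatrix (some ∘ e) (Sum.inl ∘ e)
        = R.submatrix e e from by rw [hR, Matrix.submatrix_submatrix],
      Matrix.det_submatrix_equiv_self] at this
  have hRdet' : R.det = 1 ∨ R.det = -1 := by
    rcases hRdetmem with h | h | h
    · exact absurd h hRdet.ne_zero
    · exact Or.inl h
    · exact Or.inr h
  have hkey : ((R⁻¹ * S).submatrix f g).det = R.det⁻¹ * B.det := by
    rw [← hdet1, Matrix.det_mul, Matrix.det_nonsing_inv, Ring.inverse_eq_inv']
  rw [hkey]
  simp only [Set.mem_insert_iff, Set.mem_singleton_iff] at hBdet ⊢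
  rcases hRdet' with h | h <;> rw [h] <;>
    rcases hBdet with h' | h' | h' <;> rw [h'] <;> norm_num
end

section
/- Let [R | S] be a full-row-rank matrix over the reals with R square and invertible, and let N = R^{-1} S. Then for any invertible matrix R' whose columns are a subset of the columns of [R | S], the matrix obtained analogously from the basis R' is related to N by a sequence of pivot operations; in particular, pivoting N on a nonzero entry in row r, column s corresponds to exchanging the columns r and s between the basic part R and the nonbasic part S. -/
/-- The pivot of a matrix `N` on a (nonzero) entry in row `r`, column `s`: the basis-exchange
(Tucker) pivot. -/
noncomputable def pivotAt {m n : Type*} [DecidableEq m] [DecidableEq n]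
    (N : Matrix m n ℝ) (r : m) (s : n) : Matrix m n ℝ :=
  Matrix.of fun i j =>
    if i = r then (if j = s then 1 / N r s else N r j / N r s)
    else (if j = s then - N i s / N r s else N i j - N i s * N r j / N r s)

/-- One pivot step or a simultaneous permutation of rows and columns. -/
def PivotPermStep {m n : Type*} [DecidableEq m] [DecidableEq n]
    (X Y : Matrix m n ℝ) : Prop :=
  (∃ (r : m) (s : n), X r s ≠ 0 ∧ Y = pivotAt X r s) ∨
  (∃ (σ : Equiv.Perm m) (τ : Equiv.Perm n), Y = X.submatrix σ τ)

/-!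
Exchanging column `r` of `R` for column `s` of `S` multiplies `R` on the right by the
elementary matrix `E`, the identity with column `r` replaced by column `s` of `N = R⁻¹ S`.
Hence `det E = N r s`, and the new tableau is `E⁻¹ (R⁻¹ S')`, where `R⁻¹ S'` is `N` with column
`s` replaced by the unit vector `e_r`; a direct computation shows that `E * pivotAt N r s` is
exactly this matrix.

For an arbitrary basis `R'` we induct on the number of its columns taken from `S`. If column `s`
of `S` is one of them, some row `r` whose column of `R` is not in `R'` has `N r s ≠ 0`: otherwise
`S_s = ∑ N r s • R_r` would be a linear dependency among the columns of `R'`. Pivoting on `(r, s)`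
brings one more column of `R'` into the basis. When no columns of `R'` come from `S`, `R'` and `S'`
are column permutations of `R` and `S`, and `R'⁻¹ S'` is a row and column permutation of `N`.
-/

open Matrix Finset

namespace Matrix

variable {α l m n : Type*}

lemma fromCols_updateCol_eq_submatrix_swap [DecidableEq m] [DecidableEq n]
    (R : Matrix l m α) (S : Matrix l n α) (r : m) (s : n) :
    fromCols (R.updateCol r (fun i => S i s)) (S.updateCol s (fun i => R i r)) =
      (fromCols R S).submatrix id (Equiv.swap (Sum.inl r) (Sum.inr s)) := by
  ext i (a | b)
  · by_cases ha : a = r <;> simp [ha, Equiv.swap_apply_of_ne_of_ne]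
  · by_cases hb : b = s <;> simp [hb, Equiv.swap_apply_of_ne_of_ne]

lemma submatrix_id_mulVec_comp [Semiring α] [Fintype m] [Fintype n] (A : Matrix l m α)
    {f : n → m} (hf : Function.Injective f) {w : m → α} (hw : ∀ x ∉ Set.range f, w x = 0) :
    A.submatrix id f *ᵥ (w ∘ f) = A *ᵥ w := by
  funext i
  exact Fintype.sum_of_injective f hf _ _ (fun x hx => by simp [hw x hx]) fun _ => rfl

variable [Fintype m] [DecidableEq m]

lemma det_one_updateCol [CommRing α] (r : m) (v : m → α) :
    ((1 : Matrix m m α).updateCol r v).det = v r := by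
  rw [← cramer_apply, cramer_one]
  rfl

lemma updateCol_one_mul_apply [Semiring α] (r : m) (v : m → α) (P : Matrix m n α) (i : m)
    (j : n) :
    ((1 : Matrix m m α).updateCol r v * P) i j = v i * P r j + if i = r then 0 else P i j := by
  rw [mul_apply, Fintype.sum_eq_add_sum_compl r]
  have hcompl : ∀ k ∈ ({r}ᶜ : Finset m),
      (1 : Matrix m m α).updateCol r v i k * P k j = if i = k then P k j else 0 := by
    intro k hk
    rw [mem_compl, mem_singleton] at hk
    simp [hk, one_apply]
  rw [sum_congr rfl hcompl, sum_ite_eq]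
  simp [eq_comm]

end Matrix

lemma exists_perm_of_forall_isLeft {m n : Type*} [Finite m] [Finite n] {f : m → m ⊕ n}
    {g : n → m ⊕ n} (hf : Function.Injective f) (hg : Function.Injective g)
    (hfg : ∀ k l, f k ≠ g l) (hleft : ∀ k, (f k).isLeft) :
    ∃ (σ : Equiv.Perm m) (τ : Equiv.Perm n), f = Sum.inl ∘ σ ∧ g = Sum.inr ∘ τ := by
  choose σ hσ using fun k => Sum.isLeft_iff.mp (hleft k)
  have hσ_bij : σ.Bijective :=
    Finite.injective_iff_bijective.mp fun a b hab => hf (by rw [hσ, hσ, hab])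
  have hright : ∀ l, (g l).isRight := by
    intro l
    rw [← Sum.not_isLeft, Sum.isLeft_iff]
    rintro ⟨a, ha⟩
    obtain ⟨k, rfl⟩ := hσ_bij.2 a
    exact hfg k l ((hσ k).trans ha.symm)
  choose τ hτ using fun l => Sum.isRight_iff.mp (hright l)
  have hτ_bij : τ.Bijective :=
    Finite.injective_iff_bijective.mp fun a b hab => hg (by rw [hτ, hτ, hab])
  exact ⟨.ofBijective σ hσ_bij, .ofBijective τ hτ_bij, funext hσ, funext hτ⟩

lemma card_filter_isRight_swap_add_one {m n : Type*} [Fintype m] [DecidableEq m] [DecidableEq n]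
    {f : m → m ⊕ n} (hf : Function.Injective f) {k r : m} {s : n} (hk : f k = Sum.inr s)
    (hr : Sum.inl r ∉ Set.range f) :
    #{i | (Equiv.swap (Sum.inl r) (Sum.inr s) (f i)).isRight} + 1 = #{i | (f i).isRight} := by
  have hfilter : ({i | (Equiv.swap (Sum.inl r) (Sum.inr s) (f i)).isRight} : Finset m) =
      ({i | (f i).isRight} : Finset m).erase k := by
    ext i
    simp only [mem_filter, mem_erase, mem_univ, true_and]
    by_cases hi : i = k
    · simp [hi, hk]
    · rw [Equiv.swap_apply_of_ne_of_ne (fun h => hr ⟨i, h⟩) (fun h => hi (hf (h.trans hk.symm)))]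
      simp [hi]
  rw [hfilter, card_erase_add_one]
  simp [hk]

section

variable {m n : Type*} [Fintype m] [DecidableEq m] [DecidableEq n]

lemma updateCol_one_mul_pivotAt (N : Matrix m n ℝ) {r : m} {s : n} (h : N r s ≠ 0) :
    (1 : Matrix m m ℝ).updateCol r (fun i => N i s) * pivotAt N r s =
      N.updateCol s (Pi.single r 1) := by
  ext i j
  rw [updateCol_one_mul_apply]
  by_cases hi : i = r <;> by_cases hj : j = s <;> simp [pivotAt, hi, hj] <;> field_simp <;> ring

theorem isUnit_det_updateCol_and_inv_mul_eq_pivotAt (R : Matrix m m ℝ) (S : Matrix m n ℝ)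
    (hR : IsUnit R.det) {r : m} {s : n} (h : (R⁻¹ * S) r s ≠ 0) :
    IsUnit (R.updateCol r (fun i => S i s)).det ∧
      (R.updateCol r (fun i => S i s))⁻¹ * S.updateCol s (fun i => R i r) =
        pivotAt (R⁻¹ * S) r s := by
  set N := R⁻¹ * S
  set E := (1 : Matrix m m ℝ).updateCol r (fun i => N i s)
  have hE : IsUnit E.det := by
    rw [det_one_updateCol]
    exact h.isUnit
  have hRE : R.updateCol r (fun i => S i s) = R * E := by
    rw [mul_updateCol, Matrix.mul_one]
    congr 1
    funext i
    change S i s = (R * N) i s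
    rw [mul_nonsing_inv_cancel_left _ _ hR]
  have hM : R⁻¹ * S.updateCol s (fun i => R i r) = N.updateCol s (Pi.single r 1) := by
    rw [mul_updateCol]
    congr 1
    funext i
    change (R⁻¹ * R) i r = _
    rw [nonsing_inv_mul _ hR, one_apply, Pi.single_apply]
  refine ⟨by rw [hRE, det_mul]; exact hR.mul hE, ?_⟩
  rw [hRE, Matrix.mul_inv_rev, Matrix.mul_assoc, hM, ← updateCol_one_mul_pivotAt N h,
    ← Matrix.mul_assoc, nonsing_inv_mul _ hE, Matrix.one_mul]

variable [Fintype n]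

lemma exists_pivot_row (R : Matrix m m ℝ) (S : Matrix m n ℝ) (hR : IsUnit R.det)
    {f : m → m ⊕ n} (hf : Function.Injective f)
    (hR' : IsUnit ((fromCols R S).submatrix id f).det) {k : m} {s : n} (hk : f k = Sum.inr s) :
    ∃ r, Sum.inl r ∉ Set.range f ∧ (R⁻¹ * S) r s ≠ 0 := by
  by_contra! hzero
  set w : m ⊕ n → ℝ := Sum.elim (fun a => (R⁻¹ * S) a s) (-Pi.single s 1)
  have hw : fromCols R S *ᵥ w = 0 := by
    rw [fromCols_mulVec_sumElim, mulVec_neg, mulVec_single_one, add_neg_eq_zero]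
    funext i
    change (R * (R⁻¹ * S)) i s = S i s
    rw [mul_nonsing_inv_cancel_left _ _ hR]
  have hw_supp : ∀ x ∉ Set.range f, w x = 0 := by
    rintro (a | b) hx
    · exact hzero a hx
    · have hb : b ≠ s := by
        rintro rfl
        exact hx ⟨k, hk⟩
      simp [w, hb]
  have hw_zero := eq_zero_of_mulVec_eq_zero hR'.ne_zero
    ((submatrix_id_mulVec_comp _ hf hw_supp).trans hw)
  simpa [w, hk] using congrFun hw_zero k

theorem reflTransGen_pivotPermStep_inv_mul_submatrix (R : Matrix m m ℝ) (S : Matrix m n ℝ)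
    (hR : IsUnit R.det) {f : m → m ⊕ n} {g : n → m ⊕ n} (hf : Function.Injective f)
    (hg : Function.Injective g) (hfg : ∀ k l, f k ≠ g l)
    (hR' : IsUnit ((fromCols R S).submatrix id f).det) :
    Relation.ReflTransGen PivotPermStep (R⁻¹ * S)
      (((fromCols R S).submatrix id f)⁻¹ * (fromCols R S).submatrix id g) := by
  obtain ⟨c, hc⟩ : ∃ c, #{k | (f k).isRight} = c := ⟨_, rfl⟩
  induction c generalizing R S f g with
  | zero =>
    have hleft : ∀ k, (f k).isLeft := fun k => by
      simpa using (filter_eq_empty_iff.mp (card_eq_zero.mp hc)) (mem_univ k)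
    obtain ⟨σ, τ, rfl, rfl⟩ := exists_perm_of_forall_isLeft hf hg hfg hleft
    refine .single (Or.inr ⟨σ, τ, ?_⟩)
    change (R.submatrix (Equiv.refl m) σ)⁻¹ * S.submatrix (Equiv.refl m) τ = _
    rw [inv_submatrix_equiv, submatrix_mul_equiv]
  | succ c ih =>
    obtain ⟨k, hk⟩ := card_pos.mp (show 0 < #{k | (f k).isRight} by omega)
    obtain ⟨s, hs⟩ := Sum.isRight_iff.mp (mem_filter.mp hk).2
    obtain ⟨r, hr, hrs⟩ := exists_pivot_row R S hR hf hR' hs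
    obtain ⟨hR₂, hpivot⟩ := isUnit_det_updateCol_and_inv_mul_eq_pivotAt R S hR hrs
    have hcard := card_filter_isRight_swap_add_one hf hs hr
    set e := Equiv.swap (Sum.inl r) (Sum.inr s)
    have hswap : fromCols R S = (fromCols (R.updateCol r (fun i => S i s))
        (S.updateCol s (fun i => R i r))).submatrix id e := by
      rw [fromCols_updateCol_eq_submatrix_swap, submatrix_submatrix]
      simp only [e, Function.comp_def, Equiv.swap_apply_self]
      exact (submatrix_id_id _).symm
    rw [hswap] at hR' ⊢
    refine .head (b := _ * _) (Or.inl ⟨r, s, hrs, hpivot⟩) ?_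
    exact ih _ _ hR₂ (e.injective.comp hf) (e.injective.comp hg)
      (fun k l h => hfg k l (e.injective h)) hR' (by omega)

end

/-- Let `[R | S]` have full row rank with `R` square invertible and `N = R⁻¹ * S`.
Then (i) for any invertible matrix `R'` whose columns are a subset of the columns of `[R | S]`
(the remaining columns forming `S'`), the representation matrix `R'⁻¹ * S'` is related to `N`
by a sequence of pivot operations (and row/column permutations); and (ii) in particular,
pivoting `N` on a nonzero entry in row `r`, column `s` corresponds exactly to exchanging
column `r` of `R` with column `s` of `S`. -/
theorem basis_exchange_is_pivot {m n : Type*} [Fintype m] [DecidableEq m]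
    [Fintype n] [DecidableEq n]
    (R : Matrix m m ℝ) (S : Matrix m n ℝ) (hR : IsUnit R.det)
    (N : Matrix m n ℝ) (hN : N = R⁻¹ * S) :
    (∀ (f : m → m ⊕ n) (g : n → m ⊕ n), Function.Injective f → Function.Injective g →
      (∀ k l, f k ≠ g l) →
      ∀ (R' : Matrix m m ℝ) (S' : Matrix m n ℝ),
        R' = Matrix.of (fun i k => Matrix.fromCols R S i (f k)) →
        S' = Matrix.of (fun i l => Matrix.fromCols R S i (g l)) →
        IsUnit R'.det →
        Relation.ReflTransGen PivotPermStep N (R'⁻¹ * S')) ∧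
    (∀ (r : m) (s : n), N r s ≠ 0 →
      IsUnit (R.updateCol r (fun i => S i s)).det ∧
      (R.updateCol r (fun i => S i s))⁻¹ * (S.updateCol s (fun i => R i r)) =
        pivotAt N r s) := by
  subst hN
  refine ⟨?_, fun r s => isUnit_det_updateCol_and_inv_mul_eq_pivotAt R S hR⟩
  rintro f g hf hg hfg R' S' rfl rfl hR'
  exact reflTransGen_pivotPermStep_inv_mul_submatrix R S hR hf hg hfg hR'
end

section
/- Totally unimodular matrices are closed under pivoting: if T = [[1, c], [b, D]] is totally unimodular (with scalar top-left entry 1, row vector c, column vector b, matrix D), then the pivoted matrix [[-1, c], [b, D - bc]] is totally unimodular. -/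
/-!
Take a square submatrix of the pivot `T' = [[-1, c], [b, D - bc]]`. If it contains the pivot row,
adding `b r` times that row to each other row `r` turns `T'` into `[[-1, c], [0, D]]`; expanding
along the pivot column, if it is present, leaves `±` a submatrix of `T`, and otherwise the
submatrix already is one of `T`. A submatrix containing the pivot column but not the pivot row is
handled by transposing. If it contains neither, bordering it with the pivot row and column gives a
submatrix of `T`; subtracting `b r` times the pivot row from each row `r` reduces it to
`[[1, c], [0, D - bc]]`, whose determinant is that of the original submatrix.
-/

open Matrix Function

theorem Matrix.det_succ_column_eq_of_eq_zero {R : Type*} [CommRing R] {k : ℕ}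
    (A : Matrix (Fin (k + 1)) (Fin (k + 1)) R) {i j : Fin (k + 1)}
    (hcol : ∀ i', i' ≠ i → A i' j = 0) :
    A.det = (-1) ^ (i + j : ℕ) * A i j * (A.submatrix i.succAbove j.succAbove).det := by
  rw [det_succ_column A j, Finset.sum_eq_single i (fun i' _ hi' => by simp [hcol i' hi'])
    (by simp)]

theorem neg_one_pow_mul_mem_unimodular {x : ℝ} (hx : x ∈ ({0, 1, -1} : Set ℝ)) (n : ℕ) :
    (-1) ^ n * x ∈ ({0, 1, -1} : Set ℝ) := by
  simp only [Set.mem_insert_iff, Set.mem_singleton_iff] at hx ⊢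
  rcases neg_one_pow_eq_or ℝ n with h | h <;> rw [h] <;> rcases hx with rfl | rfl | rfl <;>
    norm_num

theorem Sum.exists_eq_inr_of_ne_inl {β : Type*} {x : Unit ⊕ β} (h : x ≠ .inl ()) :
    ∃ r, x = .inr r := by
  rcases x with ⟨⟨⟩⟩ | r
  · exact absurd rfl h
  · exact ⟨r, rfl⟩

theorem IsTU.transpose {m n : Type*} {A : Matrix m n ℝ} (hA : IsTU A) : IsTU Aᵀ :=
  fun k f g hf hg => by
    rw [← transpose_submatrix, det_transpose]
    exact hA k g f hg hf

section Bordered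

variable {m n : Type*}

/-- The matrix `[[a, c], [b, D]]`, whose first row and column are indexed by `Sum.inl ()`. -/
def borderedMatrix (a : ℝ) (b : m → ℝ) (c : n → ℝ) (D : Matrix m n ℝ) :
    Matrix (Unit ⊕ m) (Unit ⊕ n) ℝ :=
  fromBlocks (of fun _ _ => a) (replicateRow Unit c) (replicateCol Unit b) D

variable {a : ℝ} {b : m → ℝ} {c : n → ℝ} {D : Matrix m n ℝ}

@[simp] theorem borderedMatrix_inl_inl : borderedMatrix a b c D (.inl ()) (.inl ()) = a := rfl
@[simp] theorem borderedMatrix_inl_inr (x : n) :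
    borderedMatrix a b c D (.inl ()) (.inr x) = c x := rfl
@[simp] theorem borderedMatrix_inr_inl (r : m) :
    borderedMatrix a b c D (.inr r) (.inl ()) = b r := rfl
@[simp] theorem borderedMatrix_inr_inr (r : m) (x : n) :
    borderedMatrix a b c D (.inr r) (.inr x) = D r x := rfl

theorem transpose_borderedMatrix : (borderedMatrix a b c D)ᵀ = borderedMatrix a c b Dᵀ := by
  ext (⟨⟨⟩⟩ | _) (⟨⟨⟩⟩ | _) <;> rfl

theorem submatrix_borderedMatrix_of_notMem_range {ι κ : Type*} (a' : ℝ) (b' : m → ℝ)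
    (f : ι → Unit ⊕ m) {g : κ → Unit ⊕ n} (hg : .inl () ∉ Set.range g) :
    (borderedMatrix a b c D).submatrix f g = (borderedMatrix a' b' c D).submatrix f g := by
  ext i j
  obtain ⟨x, hx⟩ := Sum.exists_eq_inr_of_ne_inl fun h => hg ⟨j, h⟩
  simp only [submatrix_apply, hx]
  rcases f i with ⟨⟨⟩⟩ | r <;> rfl

/-- Row `inr r` of the left matrix is row `inr r` of the right one plus `v r` times row `inl ()`. -/
theorem det_submatrix_borderedMatrix_eq_clear {k : ℕ} {f : Fin k → Unit ⊕ m}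
    (g : Fin k → Unit ⊕ n) {i₀ : Fin k} (hi₀ : f i₀ = .inl ()) (v : m → ℝ)
    (D' : Matrix m n ℝ) (hb : b = a • v) (hD : D = D' + vecMulVec v c) :
    ((borderedMatrix a b c D).submatrix f g).det =
      ((borderedMatrix a 0 c D').submatrix f g).det := by
  subst hb hD
  refine det_eq_of_forall_row_eq_smul_add_const (fun i => Sum.elim 0 v (f i)) i₀
    (by simp [hi₀]) fun i j => ?_
  simp only [submatrix_apply, hi₀]
  rcases f i with ⟨⟨⟩⟩ | r <;> rcases g j with ⟨⟨⟩⟩ | x <;>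
    simp [vecMulVec_apply, mul_comm]

theorem IsTU.det_submatrix_pivot_mem_of_inl_mem_range (hT : IsTU (borderedMatrix 1 b c D)) {k : ℕ}
    {f : Fin k → Unit ⊕ m} {g : Fin k → Unit ⊕ n} (hf : Injective f) (hg : Injective g)
    (hrow : .inl () ∈ Set.range f) :
    ((borderedMatrix (-1) b c (D - vecMulVec b c)).submatrix f g).det ∈
      ({0, 1, -1} : Set ℝ) := by
  obtain ⟨i₀, hi₀⟩ := hrow
  rw [det_submatrix_borderedMatrix_eq_clear g hi₀ (-b) D (by simp)
    (by simp [sub_eq_add_neg])]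
  by_cases hcol : .inl () ∈ Set.range g
  · obtain ⟨j₀, hj₀⟩ := hcol
    cases k with
    | zero => exact i₀.elim0
    | succ k =>
      have hg' : .inl () ∉ Set.range (g ∘ j₀.succAbove) := by
        rintro ⟨j, hj⟩
        exact Fin.succAbove_ne j₀ j (hg (hj.trans hj₀.symm))
      rw [det_succ_column_eq_of_eq_zero _ (i := i₀) (j := j₀) fun i hi => ?_]
      · have hminor := hT k (f ∘ i₀.succAbove) (g ∘ j₀.succAbove)
          (hf.comp Fin.succAbove_right_injective) (hg.comp Fin.succAbove_right_injective)
        rw [submatrix_borderedMatrix_of_notMem_range (-1) 0 _ hg'] at hminor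
        simpa [hi₀, hj₀, pow_succ] using neg_one_pow_mul_mem_unimodular hminor (i₀ + j₀ + 1)
      · obtain ⟨r, hr⟩ := Sum.exists_eq_inr_of_ne_inl fun h => hi (hf (h.trans hi₀.symm))
        simp [hr, hj₀]
  · rw [submatrix_borderedMatrix_of_notMem_range 1 b f hcol]
    exact hT k f g hf hg

theorem det_submatrix_pivot_eq_of_inl_notMem_range {k : ℕ} {f : Fin k → Unit ⊕ m}
    {g : Fin k → Unit ⊕ n} (hrow : .inl () ∉ Set.range f) (hcol : .inl () ∉ Set.range g) :
    ((borderedMatrix (-1) b c (D - vecMulVec b c)).submatrix f g).det =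
      ((borderedMatrix 1 b c D).submatrix (Fin.cons (.inl ()) f) (Fin.cons (.inl ()) g)).det := by
  rw [det_submatrix_borderedMatrix_eq_clear _ (i₀ := 0) rfl b (D - vecMulVec b c)
      (one_smul ℝ b).symm (sub_add_cancel _ _).symm,
    det_succ_column_eq_of_eq_zero _ (i := 0) (j := 0) fun i hi => ?_]
  · simp [submatrix_borderedMatrix_of_notMem_range (-1) b _ hcol]
  · obtain ⟨i, rfl⟩ := Fin.exists_succ_eq.mpr hi
    obtain ⟨r, hr⟩ := Sum.exists_eq_inr_of_ne_inl fun h => hrow ⟨i, h⟩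
    simp [hr]

end Bordered

/-- Totally unimodular matrices are closed under pivoting: if `[[1, c], [b, D]]` is TU then so
is its pivot `[[-1, c], [b, D - bc]]` on the top-left entry. -/
theorem TU_closed_under_pivot {m n : Type*}
    (b : m → ℝ) (c : n → ℝ) (D : Matrix m n ℝ)
    (hT : IsTU (Matrix.fromBlocks (Matrix.of fun (_ : Unit) (_ : Unit) => (1 : ℝ))
      (Matrix.replicateRow Unit c) (Matrix.replicateCol Unit b) D)) :
    IsTU (Matrix.fromBlocks (Matrix.of fun (_ : Unit) (_ : Unit) => (-1 : ℝ))
      (Matrix.replicateRow Unit c) (Matrix.replicateCol Unit b) (D - Matrix.vecMulVec b c)) := by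
  change IsTU (borderedMatrix 1 b c D) at hT
  change IsTU (borderedMatrix (-1) b c (D - vecMulVec b c))
  intro k f g hf hg
  by_cases hrow : .inl () ∈ Set.range f
  · exact hT.det_submatrix_pivot_mem_of_inl_mem_range hf hg hrow
  by_cases hcol : .inl () ∈ Set.range g
  · have hTt := hT.transpose
    rw [transpose_borderedMatrix] at hTt
    rw [← det_transpose, transpose_submatrix, transpose_borderedMatrix, transpose_sub,
      transpose_vecMulVec]
    exact hTt.det_submatrix_pivot_mem_of_inl_mem_range hg hf hcol
  · rw [det_submatrix_pivot_eq_of_inl_notMem_range hrow hcol]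
    exact hT (k + 1) _ _ (Fin.cons_injective_of_injective hrow hf)
      (Fin.cons_injective_of_injective hcol hg)
end

section
/- Tour matrices are closed under duplicating a column: if B is a tour matrix, then the matrix obtained by appending a copy of one of B's columns is a tour matrix. -/
/-- A matrix is (column-wise) the incidence matrix of a bidirected graph: every entry lies in
`{0, ±1, ±2}` and the absolute values of the entries of each column sum to at most `2`. -/
def IsBidirIncid {V E : Type*} [Fintype V] (M : Matrix V E ℝ) : Prop :=
  (∀ v e, M v e ∈ ({0, 1, -1, 2, -2} : Set ℝ)) ∧ ∀ e, (∑ v, |M v e|) ≤ 2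

/-- A `{0, ±1}` matrix `B` is a tour matrix if there is a bidirected graph with incidence
matrix `[Q | S]` such that `Q * B = S` and `Q` has full row rank. -/
def IsTourMatrix {m n : Type*} [Fintype m] [Fintype n] (B : Matrix m n ℝ) : Prop :=
  (∀ i j, B i j ∈ ({0, 1, -1} : Set ℝ)) ∧
  ∃ (V : Type) (_ : Fintype V) (_ : DecidableEq V) (Q : Matrix V m ℝ) (S : Matrix V n ℝ),
    IsBidirIncid Q ∧ IsBidirIncid S ∧ Q * B = S ∧ Q.rank = Fintype.card V

/-- Tour matrices are closed under duplicating a column. -/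
theorem tourMatrix_dup_col {m n : Type*} [Fintype m] [Fintype n] (B : Matrix m n ℝ)
    (hB : IsTourMatrix B) (j₀ : n) :
    IsTourMatrix (Matrix.of fun i => Sum.elim (B i) (fun _ : Unit => B i j₀)) := by
  obtain ⟨hB01, V, _, _, Q, S, hQ, hS, hQB, hrank⟩ := hB
  refine ⟨?_, V, ‹_›, ‹_›, Q, Matrix.of fun v => Sum.elim (S v) (fun _ => S v j₀),
    hQ, ⟨?_, ?_⟩, ?_, hrank⟩
  · rintro i (j | j)
    · simpa using hB01 i j
    · simpa using hB01 i j₀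
  · rintro v (e | e)
    · simpa using hS.1 v e
    · simpa using hS.1 v j₀
  · rintro (e | e)
    · simpa using hS.2 e
    · simpa using hS.2 j₀
  · ext v j
    cases j with
    | inl j => simp [Matrix.mul_apply, ← hQB]
    | inr j => simp [Matrix.mul_apply, ← hQB]
end

section
/- Totally unimodular tour matrices are closed under pivoting: if T = [[1, c], [b, D]] is a totally unimodular tour matrix with tour representation [f Q | e S] satisfying [f Q]T = [e S], then B = [[-1, c], [b, D - bc]] is a tour matrix, with tour representation [e Q | -f S]. -/
/-! From `[f Q] T = [e S]` one reads off `e = f + Q b` and `S = f c + Q D`, and substituting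
these gives `[e Q] B = [-f S]`. Since `[e Q] = [f Q] [[1, 0], [b, I]]` with a unimodular right
factor, `[e Q]` keeps full row rank. The columns of `[e Q]` and `[-f S]` are, up to sign, columns
of `[f Q e S]`, so both are bidirected incidence matrices. Finally the new entries
`D i j - b i c j` are `2 × 2` minors of `T`, hence lie in `{0, ±1}` by total unimodularity. -/

open Matrix

section Pivot

variable {R V k m n : Type*} [CommRing R] [Fintype k] [Fintype m] [DecidableEq k]

theorem fromCols_mul_fromBlocks_one_eq_fromCols_iff (F : Matrix V k R) (Q : Matrix V m R)
    (E : Matrix V k R) (S : Matrix V n R) (C : Matrix k n R) (B : Matrix m k R)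
    (D : Matrix m n R) :
    fromCols F Q * fromBlocks 1 C B D = fromCols E S ↔ E = F + Q * B ∧ S = F * C + Q * D := by
  rw [fromCols_mul_fromBlocks, fromCols_ext_iff, Matrix.mul_one, eq_comm, @eq_comm _ S]

theorem fromCols_mul_pivot {F E : Matrix V k R} {Q : Matrix V m R} {S : Matrix V n R}
    {C : Matrix k n R} {B : Matrix m k R} {D : Matrix m n R}
    (h : fromCols F Q * fromBlocks 1 C B D = fromCols E S) :
    fromCols E Q * fromBlocks (-1) C B (D - B * C) = fromCols (-F) S := by
  obtain ⟨rfl, rfl⟩ := (fromCols_mul_fromBlocks_one_eq_fromCols_iff ..).1 h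
  rw [fromCols_mul_fromBlocks, fromCols_ext_iff]
  constructor
  · rw [Matrix.mul_neg, Matrix.mul_one]; abel
  · rw [Matrix.add_mul, Matrix.mul_sub, Matrix.mul_assoc]; abel

end Pivot

theorem rank_fromCols_add_mul {K V k m : Type*} [Field K] [Fintype k] [Fintype m]
    [DecidableEq k] [DecidableEq m] (F : Matrix V k K) (Q : Matrix V m K) (B : Matrix m k K) :
    (fromCols (F + Q * B) Q).rank = (fromCols F Q).rank := by
  have hfactor : fromCols (F + Q * B) Q =
      fromCols F Q * (fromBlocks 1 0 B 1 : Matrix (k ⊕ m) (k ⊕ m) K) := by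
    rw [fromCols_mul_fromBlocks]; simp
  rw [hfactor, rank_mul_eq_left_of_isUnit_det]
  simp

section TotallyUnimodular

variable {m n : Type*} {A : Matrix m n ℝ}

theorem IsTU.apply_mem (hA : IsTU A) (i : m) (j : n) : A i j ∈ ({0, 1, -1} : Set ℝ) := by
  simpa [det_fin_one] using hA 1 (fun _ => i) (fun _ => j)
    (Function.injective_of_subsingleton _) (Function.injective_of_subsingleton _)

theorem IsTU.det_two_mem (hA : IsTU A) {i₁ i₂ : m} {j₁ j₂ : n} (hi : i₁ ≠ i₂) (hj : j₁ ≠ j₂) :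
    A i₁ j₁ * A i₂ j₂ - A i₁ j₂ * A i₂ j₁ ∈ ({0, 1, -1} : Set ℝ) := by
  have h := hA 2 ![i₁, i₂] ![j₁, j₂] (injective_pair_iff_ne.2 hi) (injective_pair_iff_ne.2 hj)
  rw [det_fin_two] at h
  simpa using h

theorem IsTU.pivot_apply_mem {b : m → ℝ} {c : n → ℝ} {D : Matrix m n ℝ}
    (hT : IsTU (fromBlocks (of fun (_ : Unit) (_ : Unit) => (1 : ℝ))
      (replicateRow Unit c) (replicateCol Unit b) D))
    (i : Unit ⊕ m) (j : Unit ⊕ n) :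
    fromBlocks (of fun (_ : Unit) (_ : Unit) => (-1 : ℝ)) (replicateRow Unit c)
      (replicateCol Unit b) (D - vecMulVec b c) i j ∈ ({0, 1, -1} : Set ℝ) := by
  rcases i with _ | i <;> rcases j with _ | j
  · simp
  · exact hT.apply_mem (.inl ()) (.inr j)
  · exact hT.apply_mem (.inr i) (.inl ())
  · simpa [vecMulVec_apply, mul_comm] using
      hT.det_two_mem (i₁ := .inl ()) (i₂ := .inr i) (j₁ := .inl ()) (j₂ := .inr j)
        Sum.inl_ne_inr Sum.inl_ne_inr

end TotallyUnimodular

section BidirectedIncidence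

variable {V E : Type*} [Fintype V] {M : Matrix V E ℝ}

theorem IsBidirIncid.of_abs_eq {E' : Type*} {M' : Matrix V E' ℝ} (hM : IsBidirIncid M)
    (g : E' → E) (habs : ∀ v e, |M' v e| = |M v (g e)|) : IsBidirIncid M' := by
  refine ⟨fun v e => ?_, fun e => ?_⟩
  · have hmem := hM.1 v (g e)
    rcases abs_eq_abs.1 (habs v e) with h | h <;> rw [h]
    · exact hmem
    · simp only [Set.mem_insert_iff, Set.mem_singleton_iff] at hmem ⊢
      rcases hmem with h | h | h | h | h <;> rw [h] <;> norm_num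
  · simp_rw [habs]
    exact hM.2 (g e)

theorem IsBidirIncid.submatrix_equiv {W : Type*} [Fintype W] (hM : IsBidirIncid M)
    (σ : W ≃ V) : IsBidirIncid (M.submatrix σ id) :=
  ⟨fun w e => hM.1 (σ w) e, fun e => (Equiv.sum_comp σ fun v => |M v e|).trans_le (hM.2 e)⟩

end BidirectedIncidence

/-- `IsTourMatrix` asks for a vertex type in `Type`; any finite vertex type can be relabelled
by `Fin`. -/
theorem isTourMatrix_of_representation {V m n : Type*} [Fintype V] [Fintype m] [Fintype n]
    {B : Matrix m n ℝ} (hB : ∀ i j, B i j ∈ ({0, 1, -1} : Set ℝ)) (Q : Matrix V m ℝ)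
    (S : Matrix V n ℝ) (hQ : IsBidirIncid Q) (hS : IsBidirIncid S) (hQS : Q * B = S)
    (hrank : Q.rank = Fintype.card V) : IsTourMatrix B := by
  let σ := (Fintype.equivFin V).symm
  refine ⟨hB, Fin (Fintype.card V), inferInstance, inferInstance, Q.submatrix σ id,
    S.submatrix σ id, hQ.submatrix_equiv σ, hS.submatrix_equiv σ, ?_, ?_⟩
  · rw [← hQS, submatrix_mul Q B σ id id Function.bijective_id, submatrix_id_id]
  · rw [Fintype.card_fin]
    exact (rank_submatrix Q σ (Equiv.refl m)).trans hrank

/-- Totally unimodular tour matrices are closed under pivoting: if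
`T = [[1, c], [b, D]]` is a TU tour matrix with tour representation `[f Q | e S]`
(so `[f Q] * T = [e S]`, `[f Q]` full row rank, and `[f Q e S]` is a bidirected
incidence matrix), then the pivoted matrix `B = [[-1, c], [b, D - bc]]` is a tour matrix,
with tour representation `[e Q | -f S]`. -/
theorem TU_tourMatrix_closed_under_pivot {V m n : Type*} [Fintype V] [Fintype m] [Fintype n]
    (f e : V → ℝ) (Q : Matrix V m ℝ) (S : Matrix V n ℝ)
    (b : m → ℝ) (c : n → ℝ) (D : Matrix m n ℝ)
    (hIncid : IsBidirIncid (Matrix.of fun v =>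
      Sum.elim (Sum.elim (fun _ : Unit => f v) (Q v))
               (Sum.elim (fun _ : Unit => e v) (S v))))
    (hrank : (Matrix.of fun v => Sum.elim (fun _ : Unit => f v) (Q v) :
      Matrix V (Unit ⊕ m) ℝ).rank = Fintype.card V)
    (hTU : IsTU (Matrix.fromBlocks (Matrix.of fun (_ : Unit) (_ : Unit) => (1 : ℝ))
      (Matrix.replicateRow Unit c) (Matrix.replicateCol Unit b) D))
    (heq : (Matrix.of fun v => Sum.elim (fun _ : Unit => f v) (Q v)) *
        (Matrix.fromBlocks (Matrix.of fun (_ : Unit) (_ : Unit) => (1 : ℝ))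
          (Matrix.replicateRow Unit c) (Matrix.replicateCol Unit b) D) =
      (Matrix.of fun v => Sum.elim (fun _ : Unit => e v) (S v))) :
    IsTourMatrix (Matrix.fromBlocks (Matrix.of fun (_ : Unit) (_ : Unit) => (-1 : ℝ))
      (Matrix.replicateRow Unit c) (Matrix.replicateCol Unit b) (D - Matrix.vecMulVec b c)) ∧
    (Matrix.of fun v => Sum.elim (fun _ : Unit => e v) (Q v)) *
        (Matrix.fromBlocks (Matrix.of fun (_ : Unit) (_ : Unit) => (-1 : ℝ))
          (Matrix.replicateRow Unit c) (Matrix.replicateCol Unit b) (D - Matrix.vecMulVec b c)) =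
      (Matrix.of fun v => Sum.elim (fun _ : Unit => -f v) (S v)) ∧
    (Matrix.of fun v => Sum.elim (fun _ : Unit => e v) (Q v) :
      Matrix V (Unit ⊕ m) ℝ).rank = Fintype.card V := by
  classical
  have hone : (of fun (_ : Unit) (_ : Unit) => (1 : ℝ)) = 1 := by ext; simp
  have hneg_one : (of fun (_ : Unit) (_ : Unit) => (-1 : ℝ)) = -1 := by ext; simp
  have hT : fromCols (replicateCol Unit f) Q *
      fromBlocks 1 (replicateRow Unit c) (replicateCol Unit b) D =
      fromCols (replicateCol Unit e) S := by
    rw [← hone]; exact heq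
  have hprod : (Matrix.of fun v => Sum.elim (fun _ : Unit => e v) (Q v)) *
      fromBlocks (of fun (_ : Unit) (_ : Unit) => (-1 : ℝ)) (replicateRow Unit c)
        (replicateCol Unit b) (D - vecMulVec b c) =
      (Matrix.of fun v => Sum.elim (fun _ : Unit => -f v) (S v)) := by
    rw [hneg_one, vecMulVec_eq Unit]
    exact fromCols_mul_pivot hT
  have hrank' : (Matrix.of fun v => Sum.elim (fun _ : Unit => e v) (Q v) :
      Matrix V (Unit ⊕ m) ℝ).rank = Fintype.card V := by
    obtain ⟨he, -⟩ := (fromCols_mul_fromBlocks_one_eq_fromCols_iff ..).1 hT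
    change (fromCols (replicateCol Unit e) Q).rank = _
    rw [he, rank_fromCols_add_mul]
    exact hrank
  have hQ' : IsBidirIncid (Matrix.of fun v => Sum.elim (fun _ : Unit => e v) (Q v)) :=
    hIncid.of_abs_eq (Sum.elim (fun _ => .inr (.inl ())) (fun j => .inl (.inr j)))
      (by rintro v (_ | j) <;> rfl)
  have hS' : IsBidirIncid (Matrix.of fun v => Sum.elim (fun _ : Unit => -f v) (S v)) :=
    hIncid.of_abs_eq (Sum.elim (fun _ => .inl (.inl ())) (fun k => .inr (.inr k)))
      (by rintro v (_ | k) <;> simp)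
  exact ⟨isTourMatrix_of_representation hTU.pivot_apply_mem _ _ hQ' hS' hprod hrank', hprod,
    hrank'⟩
end

section
/- Every network matrix is a tour matrix; more precisely, every network matrix admits a binet (bidirected graph) representation in which a chosen non-basic edge is a negative loop. -/
/-!
A directed-graph incidence matrix is totally unimodular, so by Cramer's rule the network matrix
`R⁻¹ S` has entries in `{0, ±1}`, and `[R | S]` itself, read as a bidirected graph, represents it.
For a non-loop edge `j₀` from `t` to `h`, add a negative link between `h` and `t` and contract it.
Since the deleted row of the incidence matrix is minus the sum of the others, the new incidence
matrix is `Y [R | S]` for a row operation `Y`, so it still represents `R⁻¹ S`; and `Y` has full row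
rank, because a left null vector of `Y`, extended to all vertices, would be constant yet take
opposite values at `h` and `t`. The column `e_h - e_t` of `j₀` becomes `2 e_h`, a negative loop.
-/

open Matrix

theorem Ring.inverse_coe_signType {R : Type*} [CommRing R] (s : SignType) :
    Ring.inverse (s : R) = s := by
  cases s
  · simp
  · have := Ring.inverse_unit (-1 : Rˣ)
    rwa [inv_neg_one, Units.val_neg, Units.val_one] at this
  · simp

theorem Fintype.sum_ite_val_eq_of_ne {V R : Type*} [Fintype V] [DecidableEq V]
    [AddCommMonoid R] {h t : V} (hht : h ≠ t) (f : {v // v ≠ t} → R) :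
    ∑ w : {v // v ≠ t}, (if w.1 = h then f w else 0) = f ⟨h, hht⟩ := by
  rw [Fintype.sum_eq_single ⟨h, hht⟩ fun w hw => if_neg fun hwh => hw (Subtype.ext hwh)]
  simp

namespace Matrix

variable {m n R : Type*} [CommRing R]

/-- The incidence matrix of a directed graph some of whose edges may have lost an end. -/
structure IsDirectedIncidence (A : Matrix m n R) : Prop where
  mem : ∀ i j, A i j ∈ ({0, 1, -1} : Set R)
  one_subsingleton : ∀ j, {i | A i j = 1}.Subsingleton
  neg_one_subsingleton : ∀ j, {i | A i j = -1}.Subsingleton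

namespace IsDirectedIncidence

variable {A : Matrix m n R}

section
variable (hA : A.IsDirectedIncidence)
include hA

theorem submatrix {m' n' : Type*} {f : m' → m} (hf : f.Injective) (g : n' → n) :
    (A.submatrix f g).IsDirectedIncidence where
  mem i j := hA.mem (f i) (g j)
  one_subsingleton j _ hi _ hi' := hf (hA.one_subsingleton (g j) hi hi')
  neg_one_subsingleton j _ hi _ hi' := hf (hA.neg_one_subsingleton (g j) hi hi')

theorem eq_one_or_eq_neg_one {i j} (h : A i j ≠ 0) : A i j = 1 ∨ A i j = -1 := by
  simpa [h] using hA.mem i j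

theorem eq_of_apply_eq {i i' j} (h : A i j ≠ 0) (h' : A i j = A i' j) : i = i' := by
  rcases hA.eq_one_or_eq_neg_one h with h1 | h1
  · exact hA.one_subsingleton j h1 (h'.symm.trans h1)
  · exact hA.neg_one_subsingleton j h1 (h'.symm.trans h1)

theorem add_eq_zero_of_ne {i i' j} (hi : i ≠ i') (h : A i j ≠ 0) (h' : A i' j ≠ 0) :
    A i j + A i' j = 0 := by
  have hne : A i j ≠ A i' j := fun heq => hi (hA.eq_of_apply_eq h heq)
  rcases hA.eq_one_or_eq_neg_one h with h1 | h1 <;>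
    rcases hA.eq_one_or_eq_neg_one h' with h2 | h2 <;> simp_all

theorem apply_eq_zero_of_ne {i₁ i₂ i j} (hi₁ : i ≠ i₁) (hi₂ : i ≠ i₂) (h₁₂ : i₁ ≠ i₂)
    (h₁ : A i₁ j ≠ 0) (h₂ : A i₂ j ≠ 0) : A i j = 0 := by
  by_contra h
  have hs₁ := hA.add_eq_zero_of_ne hi₁ h h₁
  have hs₂ := hA.add_eq_zero_of_ne hi₂ h h₂
  exact h₁₂ (hA.eq_of_apply_eq h₁ (by linear_combination hs₁ - hs₂))

theorem sum_col_eq_zero [Fintype m] {i₁ i₂ j} (h₁₂ : i₁ ≠ i₂) (h₁ : A i₁ j ≠ 0)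
    (h₂ : A i₂ j ≠ 0) : ∑ i, A i j = 0 := by
  rw [Finset.sum_eq_add i₁ i₂ h₁₂ (fun i _ hi => hA.apply_eq_zero_of_ne hi.1 hi.2 h₁₂ h₁ h₂)
    (by simp) (by simp)]
  exact hA.add_eq_zero_of_ne h₁₂ h₁ h₂

theorem mem_range_signTypeCast (i j) : A i j ∈ Set.range (SignType.cast : SignType → R) := by
  obtain h | h | h : A i j = 0 ∨ A i j = 1 ∨ A i j = -1 := hA.mem i j
  exacts [⟨0, h.symm⟩, ⟨1, h.symm⟩, ⟨-1, by simp [h]⟩]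

end

theorem det_mem_range_signTypeCast {k : ℕ} {M : Matrix (Fin k) (Fin k) R}
    (hM : M.IsDirectedIncidence) : M.det ∈ Set.range SignType.cast := by
  induction k with
  | zero => exact ⟨1, by simp⟩
  | succ k ih =>
    by_cases hsparse : ∃ j i₀, ∀ i ≠ i₀, M i j = 0
    · obtain ⟨j, i₀, hi₀⟩ := hsparse
      rw [det_succ_column M j, Fintype.sum_eq_single i₀ fun i hi => by simp [hi₀ i hi]]
      change _ ∈ MonoidHom.mrange SignType.castHom.toMonoidHom
      refine mul_mem (mul_mem (pow_mem ?_ _) (hM.mem_range_signTypeCast i₀ j))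
        (ih (hM.submatrix Fin.succAbove_right_injective _))
      exact ⟨-1, by simp⟩
    · -- every column holds a `1` and a `-1`, so the rows add up to zero
      push Not at hsparse
      refine ⟨0, ?_⟩
      rw [SignType.coe_zero, ← det_transpose, eq_comm]
      refine det_eq_zero_of_mulVec_eq_zero_of_mem_nonZeroDivisors (v := fun _ => 1) (i := 0) ?_
        (one_mem _)
      ext j
      obtain ⟨i₁, -, h₁⟩ := hsparse j 0
      obtain ⟨i₂, h₂₁, h₂⟩ := hsparse j i₁
      simpa [mulVec, dotProduct] using hM.sum_col_eq_zero h₂₁.symm h₁ h₂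

theorem isTotallyUnimodular (hA : A.IsDirectedIncidence) : A.IsTotallyUnimodular :=
  fun _ _ g hf _ => (hA.submatrix hf g).det_mem_range_signTypeCast

end IsDirectedIncidence

theorem IsTotallyUnimodular.inv_mul_apply_mem_range [Fintype m] [DecidableEq m]
    {A : Matrix m m R} {B : Matrix m n R} (hAB : (fromCols A B).IsTotallyUnimodular) (i : m)
    (j : n) : (A⁻¹ * B) i j ∈ Set.range SignType.cast := by
  have hdet := (isTotallyUnimodular_iff_fintype _).mp hAB m
  have hcramer : (A⁻¹ * B) i j = Ring.inverse A.det * (A.updateCol i fun k => B k j).det := by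
    rw [← cramer_apply, cramer_eq_adjugate_mulVec, inv_def]
    simp [mul_apply, mulVec, dotProduct, Finset.mul_sum, mul_assoc]
  have hA : (fromCols A B).submatrix id Sum.inl = A := by ext; simp
  have hupdate : A.updateCol i (fun k => B k j) =
      (fromCols A B).submatrix id (fun k => if k = i then Sum.inr j else Sum.inl k) := by
    ext k l
    by_cases hl : l = i <;> simp [hl]
  obtain ⟨s, hs⟩ := hA ▸ hdet id Sum.inl
  rw [hcramer, ← hs, Ring.inverse_coe_signType, hupdate]
  change _ ∈ MonoidHom.mrange SignType.castHom.toMonoidHom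
  exact mul_mem ⟨s, rfl⟩ (hdet _ _)

variable {V E : Type*}

variable (m R) in
def restoreDeletedRow [DecidableEq m] : Matrix (Option m) m R :=
  of fun v i => v.elim (-1) fun i' => if i' = i then 1 else 0

theorem restoreDeletedRow_mul_submatrix_some [Fintype m] [DecidableEq m]
    {M : Matrix (Option m) E R} (hM : ∀ e, ∑ v, M v e = 0) :
    restoreDeletedRow m R * M.submatrix some id = M := by
  ext (_ | i) e
  · have := hM e
    rw [Fintype.sum_option] at this
    simp [mul_apply, restoreDeletedRow]
    linear_combination -this
  · simp [mul_apply, restoreDeletedRow]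

theorem vecMul_restoreDeletedRow [Fintype m] [DecidableEq m] (x : Option m → R) :
    x ᵥ* restoreDeletedRow m R = fun i => x (some i) - x none := by
  ext i
  simp [vecMul, dotProduct, restoreDeletedRow, sub_eq_neg_add]

variable [DecidableEq V]

/-- Rows are vertices: contracting a negative link between `h` and `t` merges `t` into `h` with
the signs at `t` flipped. -/
def contractNegLink (M : Matrix V E R) (h t : V) : Matrix {v // v ≠ t} E R :=
  of fun w e => M w e - if w.1 = h then M t e else 0

theorem contractNegLink_mul [Fintype m] (A : Matrix V m R) (B : Matrix m E R)
    (h t : V) : contractNegLink (A * B) h t = contractNegLink A h t * B := by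
  ext w e
  by_cases hw : w.1 = h <;> simp [contractNegLink, mul_apply, hw, sub_mul, Finset.sum_sub_distrib]

theorem contractNegLink_restoreDeletedRow_mul [Fintype m] [DecidableEq m]
    {M : Matrix (Option m) E R} (hM : ∀ e, ∑ v, M v e = 0) (h t : Option m) :
    contractNegLink (restoreDeletedRow m R) h t * M.submatrix some id = contractNegLink M h t := by
  rw [← contractNegLink_mul, restoreDeletedRow_mul_submatrix_some hM]

theorem vecMul_contractNegLink [Fintype V] {h t : V} (hht : h ≠ t)
    (y : {v // v ≠ t} → R) (M : Matrix V E R) :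
    y ᵥ* contractNegLink M h t = (fun v => if hv : v = t then -y ⟨h, hht⟩ else y ⟨v, hv⟩) ᵥ* M := by
  ext e
  simp only [vecMul, dotProduct]
  rw [Fintype.sum_eq_add_sum_subtype_ne _ t]
  have hne (w : {v // v ≠ t}) : (w : V) ≠ t := w.2
  simp [contractNegLink, mul_sub, Finset.sum_sub_distrib, mul_ite,
    Fintype.sum_ite_val_eq_of_ne hht, hne]
  ring

theorem rank_contractNegLink_restoreDeletedRow {K : Type*} [Field K] [CharZero K] [Fintype m]
    [DecidableEq m] {h t : Option m} (hht : h ≠ t) :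
    (contractNegLink (restoreDeletedRow m K) h t).rank = Fintype.card {v // v ≠ t} := by
  refine LinearIndependent.rank_matrix (vecMul_injective_iff.mp ?_)
  rw [← coe_vecMulLinear, injective_iff_map_eq_zero]
  intro y hy
  simp only [coe_vecMulLinear, vecMul_contractNegLink hht, vecMul_restoreDeletedRow] at hy
  set x : Option m → K := fun v => if hv : v = t then -y ⟨h, hht⟩ else y ⟨v, hv⟩
  have hconst (v : Option m) : x v = x t := by
    suffices ∀ v, x v = x none from (this v).trans (this t).symm
    rintro (_ | i)
    exacts [rfl, sub_eq_zero.mp (congrFun hy i)]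
  have hyh : y ⟨h, hht⟩ = 0 := by
    have := hconst h
    simp only [x, dif_neg hht, dif_pos] at this
    exact self_eq_neg.mp this
  ext w
  have := hconst w
  simp only [x, dif_neg w.2, dif_pos, hyh, neg_zero] at this
  exact this

end Matrix

theorem sub_mem_of_mem_sign {x y : ℝ} (hx : x ∈ ({0, 1, -1} : Set ℝ))
    (hy : y ∈ ({0, 1, -1} : Set ℝ)) : x - y ∈ ({0, 1, -1, 2, -2} : Set ℝ) := by
  simp only [Set.mem_insert_iff, Set.mem_singleton_iff] at *
  rcases hx with rfl | rfl | rfl <;> rcases hy with rfl | rfl | rfl <;> norm_num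

theorem IsBidirIncid.submatrix {V W E F : Type*} [Fintype V] [Fintype W] {M : Matrix V E ℝ}
    (hM : IsBidirIncid M) {f : W → V} (hf : f.Injective) (g : F → E) :
    IsBidirIncid (M.submatrix f g) := by
  refine ⟨fun w e => hM.1 (f w) (g e), fun e => ?_⟩
  calc ∑ w, |M (f w) (g e)| = ∑ v ∈ Finset.univ.map ⟨f, hf⟩, |M v (g e)| := by simp
    _ ≤ ∑ v, |M v (g e)| := Finset.sum_le_univ_sum_of_nonneg fun _ => abs_nonneg _
    _ ≤ 2 := hM.2 (g e)

theorem isBidirIncid_contractNegLink {V E : Type*} [Fintype V] [DecidableEq V]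
    {M : Matrix V E ℝ} (hM : ∀ v e, M v e ∈ ({0, 1, -1} : Set ℝ))
    (hsum : ∀ e, ∑ v, |M v e| ≤ 2) {h t : V} (hht : h ≠ t) :
    IsBidirIncid (contractNegLink M h t) := by
  refine ⟨fun w e => sub_mem_of_mem_sign (hM w e) ?_, fun e => ?_⟩
  · split_ifs
    exacts [hM t e, by simp]
  · calc ∑ w, |contractNegLink M h t w e|
        ≤ ∑ w : {v // v ≠ t}, (|M w e| + if w.1 = h then |M t e| else 0) := by
          refine Finset.sum_le_sum fun w _ => ?_
          by_cases hw : w.1 = h <;> simp [contractNegLink, hw, abs_sub]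
      _ = ∑ v, |M v e| := by
          rw [Finset.sum_add_distrib, Fintype.sum_ite_val_eq_of_ne hht,
            Fintype.sum_eq_add_sum_subtype_ne _ t, add_comm]
      _ ≤ 2 := hsum e

def IsNegLoopCol {V n : Type*} (S : Matrix V n ℝ) (j : n) : Prop :=
  ∃ v, (S v j = 2 ∨ S v j = -2) ∧ ∀ w, w ≠ v → S w j = 0

theorem IsNegLoopCol.submatrix {V W n : Type*} {S : Matrix V n ℝ} {j : n}
    (hS : IsNegLoopCol S j) (e : W ≃ V) : IsNegLoopCol (S.submatrix e id) j := by
  obtain ⟨v, hv, hw⟩ := hS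
  refine ⟨e.symm v, by simpa using hv, fun w hwv => hw (e w) ?_⟩
  rintro rfl
  simp at hwv

theorem isNegLoopCol_contractNegLink {V E : Type*} [DecidableEq V] {M : Matrix V E ℝ}
    {h t : V} {e : E} (hh : M h e = 1) (ht : M t e = -1)
    (hzero : ∀ v, v ≠ h → v ≠ t → M v e = 0) : IsNegLoopCol (contractNegLink M h t) e := by
  have hht : h ≠ t := by
    rintro rfl
    norm_num [hh] at ht
  refine ⟨⟨h, hht⟩, Or.inl ?_, fun w hw => ?_⟩
  · simp only [contractNegLink, of_apply, if_pos, hh, ht]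
    norm_num
  · have hwh : w.1 ≠ h := fun hwh => hw (Subtype.ext hwh)
    simp [contractNegLink, hwh, hzero w hwh w.2]

section Digraph

variable {V E : Type*} [DecidableEq V] (tail head : E → V)

theorem digraphIncid_apply_of_ne {e : E} (he : head e ≠ tail e) (v : V) :
    digraphIncid tail head v e = (if v = head e then 1 else 0) - (if v = tail e then 1 else 0) :=
  if_neg he

theorem eq_head_of_digraphIncid_eq_one {v : V} {e : E} (h : digraphIncid tail head v e = 1) :
    v = head e := by
  simp only [digraphIncid, of_apply] at h
  split_ifs at h <;> first | assumption | norm_num at h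

theorem eq_tail_of_digraphIncid_eq_neg_one {v : V} {e : E}
    (h : digraphIncid tail head v e = -1) : v = tail e := by
  simp only [digraphIncid, of_apply] at h
  split_ifs at h <;> first | assumption | norm_num at h

theorem isDirectedIncidence_digraphIncid : (digraphIncid tail head).IsDirectedIncidence where
  mem v e := by
    simp only [digraphIncid, of_apply, Set.mem_insert_iff, Set.mem_singleton_iff]
    split_ifs <;> norm_num
  one_subsingleton e _ hv _ hv' :=
    (eq_head_of_digraphIncid_eq_one tail head hv).trans
      (eq_head_of_digraphIncid_eq_one tail head hv').symm
  neg_one_subsingleton e _ hv _ hv' :=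
    (eq_tail_of_digraphIncid_eq_neg_one tail head hv).trans
      (eq_tail_of_digraphIncid_eq_neg_one tail head hv').symm

variable [Fintype V]

theorem sum_digraphIncid (e : E) : ∑ v, digraphIncid tail head v e = 0 := by
  by_cases he : head e = tail e
  · simp [digraphIncid, he]
  · simp [digraphIncid_apply_of_ne tail head he, Finset.sum_sub_distrib]

theorem sum_abs_digraphIncid_le (e : E) : ∑ v, |digraphIncid tail head v e| ≤ 2 := by
  by_cases he : head e = tail e
  · simp [digraphIncid, he]
  · calc ∑ v, |digraphIncid tail head v e|
        ≤ ∑ v, ((if v = head e then 1 else 0) + (if v = tail e then 1 else 0)) := by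
          refine Finset.sum_le_sum fun v _ => ?_
          rw [digraphIncid_apply_of_ne tail head he]
          split_ifs <;> norm_num
      _ = 2 := by
          rw [Finset.sum_add_distrib]
          norm_num

theorem isBidirIncid_digraphIncid : IsBidirIncid (digraphIncid tail head) := by
  refine ⟨fun v e => ?_, sum_abs_digraphIncid_le tail head⟩
  simpa using sub_mem_of_mem_sign ((isDirectedIncidence_digraphIncid tail head).mem v e)
    (Set.mem_insert _ _)

end Digraph

def IsBinetRep {V m n : Type*} [Fintype V] [Fintype m] (B : Matrix m n ℝ) (Q : Matrix V m ℝ)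
    (S : Matrix V n ℝ) : Prop :=
  IsBidirIncid Q ∧ IsBidirIncid S ∧ Q * B = S ∧ Q.rank = Fintype.card V

theorem IsBinetRep.submatrix {V W m n : Type*} [Fintype V] [Fintype W] [Fintype m]
    {B : Matrix m n ℝ} {Q : Matrix V m ℝ} {S : Matrix V n ℝ} (hrep : IsBinetRep B Q S)
    (e : W ≃ V) : IsBinetRep B (Q.submatrix e id) (S.submatrix e id) := by
  obtain ⟨hQ, hS, hQB, hrank⟩ := hrep
  refine ⟨hQ.submatrix e.injective id, hS.submatrix e.injective id, ?_, ?_⟩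
  · rw [← hQB]
    ext
    simp [mul_apply]
  · rw [Fintype.card_congr e, ← hrank]
    exact rank_submatrix Q e (Equiv.refl m)

theorem isBinetRep_self {m n : Type*} [Fintype m] [DecidableEq m] {R : Matrix m m ℝ}
    {S : Matrix m n ℝ} (hR : IsUnit R.det) (hRi : IsBidirIncid R) (hSi : IsBidirIncid S) :
    IsBinetRep (R⁻¹ * S) R S :=
  ⟨hRi, hSi, mul_nonsing_inv_cancel_left R S hR,
    rank_of_isUnit R ((isUnit_iff_isUnit_det R).2 hR)⟩

theorem isBinetRep_mul {V m n : Type*} [Fintype V] [Fintype m] [DecidableEq m]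
    {R : Matrix m m ℝ} {S : Matrix m n ℝ} (hR : IsUnit R.det) {Y : Matrix V m ℝ}
    (hY : Y.rank = Fintype.card V) (hYR : IsBidirIncid (Y * R)) (hYS : IsBidirIncid (Y * S)) :
    IsBinetRep (R⁻¹ * S) (Y * R) (Y * S) :=
  ⟨hYR, hYS, by rw [Matrix.mul_assoc, mul_nonsing_inv_cancel_left R S hR],
    by rw [rank_mul_eq_left_of_isUnit_det R Y hR, hY]⟩

section NetworkMatrix

variable {m n : Type*} [Fintype m] [DecidableEq m] (tail head : m ⊕ n → Option m)

theorem networkMatrix_apply_mem (i : m) (j : n) :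
    (((digraphIncid tail head).submatrix some Sum.inl)⁻¹ *
      (digraphIncid tail head).submatrix some Sum.inr) i j ∈ ({0, 1, -1} : Set ℝ) := by
  have hTU : (fromCols ((digraphIncid tail head).submatrix some Sum.inl)
      ((digraphIncid tail head).submatrix some Sum.inr)).IsTotallyUnimodular := by
    have := ((isDirectedIncidence_digraphIncid tail head).submatrix (Option.some_injective m)
      id).isTotallyUnimodular
    rwa [← fromCols_toCols ((digraphIncid tail head).submatrix some id)] at this
  obtain ⟨s, hs⟩ := hTU.inv_mul_apply_mem_range i j
  rw [← hs]
  cases s <;> simp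

theorem isBinetRep_contractNegLink_digraphIncid
    (hdet : IsUnit ((digraphIncid tail head).submatrix some Sum.inl).det) {h t : Option m}
    (hht : h ≠ t) :
    IsBinetRep (((digraphIncid tail head).submatrix some Sum.inl)⁻¹ *
        (digraphIncid tail head).submatrix some Sum.inr)
      ((contractNegLink (digraphIncid tail head) h t).submatrix id Sum.inl)
      ((contractNegLink (digraphIncid tail head) h t).submatrix id Sum.inr) := by
  have hcontract : IsBidirIncid (contractNegLink (digraphIncid tail head) h t) :=
    isBidirIncid_contractNegLink (isDirectedIncidence_digraphIncid tail head).mem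
      (sum_abs_digraphIncid_le tail head) hht
  have hYR : contractNegLink (restoreDeletedRow m ℝ) h t *
      (digraphIncid tail head).submatrix some Sum.inl =
      (contractNegLink (digraphIncid tail head) h t).submatrix id Sum.inl :=
    contractNegLink_restoreDeletedRow_mul (fun e => sum_digraphIncid tail head _) h t
  have hYS : contractNegLink (restoreDeletedRow m ℝ) h t *
      (digraphIncid tail head).submatrix some Sum.inr =
      (contractNegLink (digraphIncid tail head) h t).submatrix id Sum.inr :=
    contractNegLink_restoreDeletedRow_mul (fun e => sum_digraphIncid tail head _) h t
  rw [← hYR, ← hYS]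
  exact isBinetRep_mul hdet (rank_contractNegLink_restoreDeletedRow hht)
    (hYR ▸ hcontract.submatrix Function.injective_id Sum.inl)
    (hYS ▸ hcontract.submatrix Function.injective_id Sum.inr)

end NetworkMatrix

theorem isNegLoopCol_contractNegLink_digraphIncid {m n : Type*} [DecidableEq m]
    (tail head : m ⊕ n → Option m) {j₀ : n} (hj₀ : head (Sum.inr j₀) ≠ tail (Sum.inr j₀)) :
    IsNegLoopCol ((contractNegLink (digraphIncid tail head) (head (Sum.inr j₀))
      (tail (Sum.inr j₀))).submatrix id Sum.inr) j₀ :=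
  isNegLoopCol_contractNegLink (by simp [digraphIncid_apply_of_ne tail head hj₀, hj₀])
    (by simp [digraphIncid_apply_of_ne tail head hj₀, hj₀.symm])
    fun v hvh hvt => by simp [digraphIncid_apply_of_ne tail head hj₀, hvh, hvt]

/-- Every network matrix is a tour matrix; more precisely, for every non-basic edge which is
not a loop of the directed graph there is a binet (bidirected graph) representation of the
network matrix in which that edge becomes a negative loop (its column has a single nonzero
entry, equal to ±2). -/
theorem networkMatrix_isTourMatrix {m n : Type*} [Fintype m] [DecidableEq m] [Fintype n]
    (tail head : m ⊕ n → Option m) (R : Matrix m m ℝ) (S : Matrix m n ℝ)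
    (hR : R = (digraphIncid tail head).submatrix some Sum.inl)
    (hS : S = (digraphIncid tail head).submatrix some Sum.inr)
    (hRdet : IsUnit R.det) :
    IsTourMatrix (R⁻¹ * S) ∧
    ∀ j₀ : n, head (Sum.inr j₀) ≠ tail (Sum.inr j₀) →
      ∃ (V : Type) (_ : Fintype V) (_ : DecidableEq V)
        (Q : Matrix V m ℝ) (S' : Matrix V n ℝ),
        IsBidirIncid Q ∧ IsBidirIncid S' ∧ Q * (R⁻¹ * S) = S' ∧
        Q.rank = Fintype.card V ∧
        ∃ v : V, (S' v j₀ = 2 ∨ S' v j₀ = -2) ∧ ∀ w, w ≠ v → S' w j₀ = 0 := by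
  subst hR hS
  have hN := isBidirIncid_digraphIncid tail head
  have hdirected := isBinetRep_self hRdet (hN.submatrix (Option.some_injective m) Sum.inl)
    (hN.submatrix (Option.some_injective m) Sum.inr)
  refine ⟨⟨networkMatrix_apply_mem tail head, Fin _, inferInstance, inferInstance, _, _,
    hdirected.submatrix (Fintype.equivFin m).symm⟩, fun j₀ hj₀ => ?_⟩
  have e := (Fintype.equivFin {v // v ≠ tail (Sum.inr j₀)}).symm
  obtain ⟨hQ, hS, hQB, hrank⟩ :=
    (isBinetRep_contractNegLink_digraphIncid tail head hRdet hj₀).submatrix e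
  exact ⟨Fin _, inferInstance, inferInstance, _, _, hQ, hS, hQB, hrank,
    (isNegLoopCol_contractNegLink_digraphIncid tail head hj₀).submatrix e⟩
end

section
/- Ghouila-Houri row version for the whole matrix: if B ∈ {0,±1}^{n×m} is totally unimodular, then there exists x ∈ {±1}^n such that every entry of x^T B lies in {0, +1, -1}. -/
open Matrix Set Filter Topology

theorem IsTU.isTotallyUnimodular {m n : Type*} {B : Matrix m n ℝ} (hB : IsTU B) :
    B.IsTotallyUnimodular := by
  intro k f g hf hg
  rcases hB k f g hf hg with h | h | h <;> rw [h]
  exacts [⟨0, rfl⟩, ⟨1, rfl⟩, ⟨-1, rfl⟩]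

theorem exists_ne_zero_forall_dotProduct_eq_zero {K m : Type*} [Field K] [Fintype m]
    {S : Set (m → K)} (hS : Submodule.span K S ≠ ⊤) : ∃ d ≠ 0, ∀ v ∈ S, d ⬝ᵥ v = 0 := by
  classical
  obtain ⟨f, hf0, hker⟩ := (Submodule.span K S).exists_le_ker_of_lt_top hS.lt_top
  refine ⟨(dotProductEquiv K m).symm f, by simpa using hf0, fun v hv => ?_⟩
  have hfv : f v = 0 := hker (Submodule.subset_span hv)
  rwa [← (dotProductEquiv K m).apply_symm_apply f, dotProductEquiv_apply_apply] at hfv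

theorem eq_zero_of_mem_extremePoints_of_add_mem_of_sub_mem {𝕜 E : Type*} [Field 𝕜]
    [LinearOrder 𝕜] [IsStrictOrderedRing 𝕜] [AddCommGroup E] [Module 𝕜 E] {s : Set E} {x v : E}
    (hx : x ∈ s.extremePoints 𝕜) (h₁ : x + v ∈ s) (h₂ : x - v ∈ s) : v = 0 := by
  have hmid : x ∈ openSegment 𝕜 (x + v) (x - v) :=
    ⟨1 / 2, 1 / 2, by norm_num, by norm_num, by norm_num, by module⟩
  simpa using hx.2 h₁ h₂ hmid

theorem exists_linearIndependent_comp_of_span_image_eq_top {K m ι : Type*} [Field K] [Fintype m]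
    {v : ι → m → K} {S : Set ι} (hS : Submodule.span K (v '' S) = ⊤) :
    ∃ g : m → ι, (∀ i, g i ∈ S) ∧ LinearIndependent K (v ∘ g) := by
  obtain ⟨κ, a, -, hspan, hli⟩ := exists_linearIndependent' K (S.domRestrict v)
  rw [range_domRestrict, hS] at hspan
  let e := (Pi.basisFun K m).indexEquiv (.mk hli hspan.ge)
  exact ⟨fun i => a (e i), fun i => (a (e i)).2, hli.comp e e.injective⟩

theorem span_col_active_eq_top_of_mem_extremePoints {m ι : Type*} [Fintype m] [Finite ι]
    {A : Matrix m ι ℝ} {l u : ι → ℝ} {x : m → ℝ}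
    (hx : x ∈ ((· ᵥ* A) ⁻¹' Icc l u).extremePoints ℝ) :
    Submodule.span ℝ (A.col '' {k | (x ᵥ* A) k = l k ∨ (x ᵥ* A) k = u k}) = ⊤ := by
  have hP (y : m → ℝ) : y ∈ (· ᵥ* A) ⁻¹' Icc l u ↔ ∀ k, (y ᵥ* A) k ∈ Icc (l k) (u k) := by
    rw [mem_preimage, ← pi_univ_Icc, mem_univ_pi]
  -- Otherwise some `d ≠ 0` is orthogonal to every tight column, and `x ± t • d` stay feasible.
  by_contra hS
  obtain ⟨d, hd0, hd⟩ := exists_ne_zero_forall_dotProduct_eq_zero hS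
  have hev : ∀ᶠ t in 𝓝 (0 : ℝ), x + t • d ∈ (· ᵥ* A) ⁻¹' Icc l u := by
    simp only [hP, eventually_all, add_vecMul, smul_vecMul, Pi.add_apply, Pi.smul_apply,
      smul_eq_mul]
    intro k
    by_cases hk : (x ᵥ* A) k = l k ∨ (x ᵥ* A) k = u k
    · have hdk : (d ᵥ* A) k = 0 := hd _ (mem_image_of_mem _ hk)
      simpa [hdk] using (hP x).1 hx.1 k
    · have hslack : (x ᵥ* A) k ∈ Ioo (l k) (u k) := by
        obtain ⟨hl, hu⟩ := (hP x).1 hx.1 k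
        obtain ⟨hkl, hku⟩ := not_or.1 hk
        exact ⟨hl.lt_of_ne' hkl, hu.lt_of_ne hku⟩
      have hcont : Continuous fun t : ℝ => (x ᵥ* A) k + t * (d ᵥ* A) k := by fun_prop
      exact ((hcont.tendsto' 0 _ (by simp)).eventually (isOpen_Ioo.mem_nhds hslack)).mono
        fun t ht => Ioo_subset_Icc_self ht
  have hev' := hev.and ((continuous_neg.tendsto' 0 0 neg_zero).eventually hev)
  obtain ⟨t, ⟨hplus, hminus⟩, ht⟩ :=
    ((hev'.filter_mono nhdsWithin_le_nhds).and (self_mem_nhdsWithin (s := {0}ᶜ))).exists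
  rw [neg_smul, ← sub_eq_add_neg] at hminus
  exact smul_ne_zero ht hd0 (eq_zero_of_mem_extremePoints_of_add_mem_of_sub_mem hx hplus hminus)

namespace Matrix.IsTotallyUnimodular

variable {m ι R : Type*} [CommRing R]

theorem exists_map_intCast_eq {A : Matrix m ι R} (hA : A.IsTotallyUnimodular) :
    ∃ C : Matrix m ι ℤ, C.map (↑) = A := by
  choose s hs using hA.apply
  exact ⟨of fun i j => s i j, ext fun i j => by simp [← hs i j]⟩

theorem det_mem_range [Fintype m] [DecidableEq m] {M : Matrix m m R}
    (hM : M.IsTotallyUnimodular) : M.det ∈ range SignType.cast := by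
  simpa using (M.isTotallyUnimodular_iff_fintype.1 hM) m id id

theorem exists_intCast_eq_of_vecMul_eq [Fintype m] [DecidableEq m] {M : Matrix m m R}
    (hM : M.IsTotallyUnimodular) (hdet : M.det ≠ 0) {x : m → R} {b : m → ℤ}
    (hx : x ᵥ* M = (↑) ∘ b) : ∃ w : m → ℤ, x = (↑) ∘ w := by
  obtain ⟨C, rfl⟩ := hM.exists_map_intCast_eq
  obtain ⟨s, hs⟩ := hM.det_mem_range
  have hs2 : (s : R) * s = 1 := by
    rcases s with _ | _ | _
    · exact absurd hs.symm (by simpa using hdet)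
    all_goals simp
  -- Cramer's rule, with `det M = s = ±1`.
  have hsx : (s : R) • x = ((↑) ∘ b) ᵥ* (adjugate C).map (↑) := by
    have hadj : (adjugate C).map ((↑) : ℤ → R) = adjugate (C.map (↑)) :=
      (Int.castRingHom R).map_adjugate C
    rw [← hx, vecMul_vecMul, hadj, mul_adjugate, ← hs, vecMul_smul, vecMul_one]
  refine ⟨fun i => s * (b ᵥ* adjugate C) i, funext fun i => ?_⟩
  have hcast : (((b ᵥ* adjugate C) i : ℤ) : R) = s * x i :=
    ((Int.castRingHom R).map_vecMul (adjugate C) b i).trans (congrFun hsx i).symm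
  rw [Function.comp_apply, Int.cast_mul, hcast, SignType.intCast_cast, ← mul_assoc, hs2, one_mul]

theorem exists_intCast_eq_of_span_col_eq_top [Fintype m] {K : Type*} [Field K]
    {A : Matrix m ι K} (hA : A.IsTotallyUnimodular) {S : Set ι}
    (hS : Submodule.span K (A.col '' S) = ⊤) {x : m → K}
    (hx : ∀ k ∈ S, (x ᵥ* A) k ∈ range ((↑) : ℤ → K)) :
    ∃ w : m → ℤ, x = (↑) ∘ w := by
  classical
  obtain ⟨g, hgS, hli⟩ := exists_linearIndependent_comp_of_span_image_eq_top hS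
  choose b hb using fun i => hx (g i) (hgS i)
  have hdet : (A.submatrix id g).det ≠ 0 :=
    ((isUnit_iff_isUnit_det _).1 (linearIndependent_cols_iff_isUnit.1 hli)).ne_zero
  exact (hA.submatrix id g).exists_intCast_eq_of_vecMul_eq hdet (funext fun i => (hb i).symm)

theorem exists_intCast_mem_of_isBounded [Fintype m] [Finite ι] {A : Matrix m ι ℝ}
    (hA : A.IsTotallyUnimodular) {l u : ι → ℤ}
    (hbdd : Bornology.IsBounded ((· ᵥ* A) ⁻¹' Icc ((↑) ∘ l) ((↑) ∘ u)))
    (hne : ((· ᵥ* A) ⁻¹' Icc ((↑) ∘ l : ι → ℝ) ((↑) ∘ u)).Nonempty) :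
    ∃ w : m → ℤ, ((↑) ∘ w) ᵥ* A ∈ Icc ((↑) ∘ l : ι → ℝ) ((↑) ∘ u) := by
  have hclosed : IsClosed ((· ᵥ* A) ⁻¹' Icc ((↑) ∘ l : ι → ℝ) ((↑) ∘ u)) :=
    isClosed_Icc.preimage (continuous_id.matrix_vecMul continuous_const)
  obtain ⟨x, hx⟩ := (Metric.isCompact_of_isClosed_isBounded hclosed hbdd).extremePoints_nonempty hne
  obtain ⟨w, rfl⟩ := hA.exists_intCast_eq_of_span_col_eq_top
    (span_col_active_eq_top_of_mem_extremePoints hx)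
    fun k hk => hk.elim (fun h => ⟨l k, h.symm⟩) fun h => ⟨u k, h.symm⟩
  exact ⟨w, hx.1⟩

theorem exists_floor_le_vecMul_le_ceil [Fintype m] [Finite ι] {A : Matrix m ι ℝ}
    (hA : A.IsTotallyUnimodular) (y : m → ℝ) :
    ∃ w : m → ℤ, (∀ i, ⌊y i⌋ ≤ w i ∧ w i ≤ ⌈y i⌉) ∧
      ∀ k, (⌊(y ᵥ* A) k⌋ : ℝ) ≤ (((↑) ∘ w) ᵥ* A) k ∧ (((↑) ∘ w) ᵥ* A) k ≤ ⌈(y ᵥ* A) k⌉ := by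
  classical
  set l : m ⊕ ι → ℤ := Sum.elim (⌊y ·⌋) (⌊(y ᵥ* A) ·⌋)
  set u : m ⊕ ι → ℤ := Sum.elim (⌈y ·⌉) (⌈(y ᵥ* A) ·⌉)
  have hP (x : m → ℝ) : x ∈ (· ᵥ* fromCols 1 A) ⁻¹' Icc ((↑) ∘ l) ((↑) ∘ u) ↔
      (∀ i, x i ∈ Icc (⌊y i⌋ : ℝ) ⌈y i⌉) ∧
        ∀ k, (x ᵥ* A) k ∈ Icc (⌊(y ᵥ* A) k⌋ : ℝ) ⌈(y ᵥ* A) k⌉ := by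
    simp only [mem_preimage, ← pi_univ_Icc, mem_univ_pi, Sum.forall, vecMul_fromCols, vecMul_one]
    simp [l, u]
  have hbdd := (Metric.isBounded_Icc (fun i => (⌊y i⌋ : ℝ)) fun i => (⌈y i⌉ : ℝ)).subset
    fun x hx => ⟨fun i => (((hP x).1 hx).1 i).1, fun i => (((hP x).1 hx).1 i).2⟩
  obtain ⟨w, hw⟩ := hA.one_fromCols.exists_intCast_mem_of_isBounded hbdd
    ⟨y, (hP y).2 ⟨fun i => ⟨Int.floor_le _, Int.le_ceil _⟩,
      fun k => ⟨Int.floor_le _, Int.le_ceil _⟩⟩⟩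
  obtain ⟨hwbox, hwA⟩ := (hP _).1 hw
  exact ⟨w, fun i => ⟨Int.cast_le.1 (hwbox i).1, Int.cast_le.1 (hwbox i).2⟩, hwA⟩

end Matrix.IsTotallyUnimodular

theorem intCast_two_mul_sub_mem_of_floor_le_of_le_ceil {s d : ℤ}
    (hlo : (⌊(d : ℝ) / 2⌋ : ℝ) ≤ s) (hhi : (s : ℝ) ≤ ⌈(d : ℝ) / 2⌉) :
    ((2 * s - d : ℤ) : ℝ) ∈ ({0, 1, -1} : Set ℝ) := by
  have hfloor := Int.sub_one_lt_floor ((d : ℝ) / 2)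
  have hceil := Int.ceil_lt_add_one ((d : ℝ) / 2)
  have hlt : -2 < 2 * s - d ∧ 2 * s - d < 2 := by
    constructor <;> (rw [← Int.cast_lt (R := ℝ)]; push_cast; linarith)
  rcases (by omega : 2 * s - d = 0 ∨ 2 * s - d = 1 ∨ 2 * s - d = -1) with h | h | h <;> simp [h]

/-- Ghouila-Houri, row version for the whole matrix: for a totally unimodular matrix `B`
there is a `±1` signing `x` of the rows such that `xᵀB` is a `{0, ±1}` vector. -/
theorem ghouilaHouri_full_rows {m n : Type*} [Fintype m] [Fintype n]
    (B : Matrix m n ℝ) (hB : IsTU B) :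
    ∃ x : m → ℝ, (∀ i, x i = 1 ∨ x i = -1) ∧
      ∀ j, (∑ i, x i * B i j) ∈ ({0, 1, -1} : Set ℝ) := by
  obtain ⟨C, rfl⟩ := hB.isTotallyUnimodular.exists_map_intCast_eq
  obtain ⟨w, hw, hwC⟩ := hB.isTotallyUnimodular.exists_floor_le_vecMul_le_ceil fun _ => 1 / 2
  refine ⟨fun i => 2 * w i - 1, fun i => ?_, fun j => ?_⟩
  · have hwi : w i = 0 ∨ w i = 1 := by
      obtain ⟨h0, h1⟩ := hw i
      norm_num at h0 h1
      omega
    rcases hwi with h | h <;> norm_num [h]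
  · have hhalf : ((fun _ => (1 / 2 : ℝ)) ᵥ* C.map (↑)) j = ((∑ i, C i j : ℤ) : ℝ) / 2 := by
      simp only [vecMul, dotProduct, map_apply, ← Finset.mul_sum, Int.cast_sum]
      ring
    have hcast : (((↑) ∘ w) ᵥ* C.map (↑)) j = ((w ᵥ* C) j : ℝ) :=
      ((Int.castRingHom ℝ).map_vecMul C w j).symm
    have hsum : ∑ i, (2 * (w i : ℝ) - 1) * C.map (↑) i j =
        ((2 * (w ᵥ* C) j - ∑ i, C i j : ℤ) : ℝ) := by
      simp [vecMul, dotProduct, sub_mul, Finset.mul_sum, mul_assoc]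
    obtain ⟨hlo, hhi⟩ := hwC j
    rw [hhalf, hcast] at hlo hhi
    rw [hsum]
    exact intCast_two_mul_sub_mem_of_floor_le_of_le_ceil hlo hhi
end

section
/- In the 3-sum of two network matrices N1 = [[A, a, a],[c, 0, 1]] and N2 = [[1, 0, b],[d, d, B]], with directed graph incidence representations [R1|S1] and [R2|S2] as in the construction, the concatenated matrix R' Q S' identity holds: the block matrix R' = [[r1, r2],[r1', r2'],[r1'', r2''],[R1', 0],[0, R2']] satisfies R'·[[A, ab],[dc, B]] = S' where S' is the corresponding block matrix of the s-vectors, given the component equations derived from R1 N1 = S1 and R2 N2 = S2. -/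
open Matrix

/-- The incidence-matrix identity behind the 3-sum of two network matrices
`N₁ = [[A, a, a],[c, 0, 1]]` and `N₂ = [[1, 0, b],[d, d, B]]`: given the component equations
obtained by expanding `R₁N₁ = S₁` and `R₂N₂ = S₂`, the concatenated block matrix `R'`
satisfies `R' * [[A, ab],[dc, B]] = S'`. -/
theorem threeSum_incidence_identity
    {α β γ δ α' γ' : Type*} [Fintype α] [Fintype β] [Fintype γ] [Fintype δ]
    [Fintype α'] [Fintype γ']
    (A : Matrix α β ℝ) (a : α → ℝ) (c : β → ℝ)
    (B : Matrix γ δ ℝ) (d : γ → ℝ) (b : δ → ℝ)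
    (r1 r1' r1'' : α → ℝ) (s1 s1' s1'' : β → ℝ)
    (r2 r2' r2'' : γ → ℝ) (s2 s2' s2'' : δ → ℝ)
    (R1' : Matrix α' α ℝ) (S1' : Matrix α' β ℝ)
    (R2' : Matrix γ' γ ℝ) (S2' : Matrix γ' δ ℝ)
    (h1a : r1 ᵥ* A - c = s1) (h1b : r1' ᵥ* A + c = s1') (h1c : r1'' ᵥ* A = s1'')
    (h2a : r1 ⬝ᵥ a = 0) (h2b : r1' ⬝ᵥ a = -1) (h2c : r1'' ⬝ᵥ a = 1)
    (h3 : R1' * A = S1') (h4 : R1' *ᵥ a = 0)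
    (h5a : r2 ⬝ᵥ d = -1) (h5b : r2' ⬝ᵥ d = 1) (h5c : r2'' ⬝ᵥ d = 0)
    (h6a : r2 ᵥ* B = s2) (h6b : r2' ᵥ* B - b = s2') (h6c : r2'' ᵥ* B + b = s2'')
    (h7 : R2' *ᵥ d = 0) (h8 : R2' * B = S2') :
    (Matrix.of fun i : Fin 3 ⊕ (α' ⊕ γ') =>
        match i with
        | Sum.inl k => Sum.elim (![r1, r1', r1''] k) (![r2, r2', r2''] k)
        | Sum.inr (Sum.inl i') => Sum.elim (R1' i') 0
        | Sum.inr (Sum.inr j') => Sum.elim 0 (R2' j')) *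
      Matrix.fromBlocks A (vecMulVec a b) (vecMulVec d c) B =
    (Matrix.of fun i : Fin 3 ⊕ (α' ⊕ γ') =>
        match i with
        | Sum.inl k => Sum.elim (![s1, s1', s1''] k) (![s2, s2', s2''] k)
        | Sum.inr (Sum.inl i') => Sum.elim (S1' i') 0
        | Sum.inr (Sum.inr j') => Sum.elim 0 (S2' j')) := by
  ext i j
  simp only [dotProduct] at h2a h2b h2c h5a h5b h5c
  have h4' : ∀ i', ∑ x, R1' i' x * a x = 0 := fun i' => congrFun h4 i'
  have h7' : ∀ j', ∑ x, R2' j' x * d x = 0 := fun j' => congrFun h7 j'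
  rcases i with k | i'
  · fin_cases k <;> rcases j with j | j <;>
      simp only [Matrix.mul_apply, Fintype.sum_sum_type, Matrix.of_apply,
        Matrix.fromBlocks_apply₁₁, Matrix.fromBlocks_apply₁₂,
        Matrix.fromBlocks_apply₂₁, Matrix.fromBlocks_apply₂₂,
        Matrix.vecMulVec_apply, Sum.elim_inl, Sum.elim_inr,
        Matrix.cons_val_zero, Matrix.cons_val_one, Matrix.head_cons,
        Fin.isValue, ← h1a, ← h1b, ← h1c, ← h6a, ← h6b, ← h6c,
        Pi.sub_apply, Pi.add_apply, Matrix.vecMul, dotProduct] <;>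
      simp only [← mul_assoc, ← Finset.sum_mul] <;>
      simp [h2a, h2b, h2c, h5a, h5b, h5c, Matrix.vecMul, dotProduct] <;> ring
  · rcases i' with i' | j' <;> rcases j with j | j <;>
      simp only [Matrix.mul_apply, Fintype.sum_sum_type, Matrix.of_apply,
        Matrix.fromBlocks_apply₁₁, Matrix.fromBlocks_apply₁₂,
        Matrix.fromBlocks_apply₂₁, Matrix.fromBlocks_apply₂₂,
        Matrix.vecMulVec_apply, Sum.elim_inl, Sum.elim_inr, Pi.zero_apply,
        zero_mul, Finset.sum_const_zero, add_zero, zero_add,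
        ← h3, ← h8, Matrix.mul_apply] <;>
      simp only [← mul_assoc, ← Finset.sum_mul, h4', h7'] <;> ring
end

section
/- Determinant factorization in the 3-sum construction: suppose the square matrix R̂ = [[r1', r2'],[r1'', r2''],[R1', 0],[0, R2']] is such that r1' + u·r1'' + q·R1' = 0 for some scalar u ≠ 0 and row vector q. Then det(R̂) = det([r1''; R1']) · ( det([r2'; R2']) + u·det([r2''; R2']) ). Consequently, if det([r1''; R1']) ≠ 0 and exactly one of det([r2'; R2']), det([r2''; R2']) is nonzero, then R̂ is nonsingular. -/
open Matrix

/-- Determinant factorization in the 3-sum construction.  If the first row `(r1' | r2')` of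
the square block matrix `R̂` (with rows `(r1' | r2')`, `(r1'' | r2'')`, `(R1' | 0)`,
`(0 | R2')`) satisfies `r1' + u·r1'' + q·R1' = 0` with `u ≠ 0`, then
`det R̂ = det [r1''; R1'] · (det [r2'; R2'] + u · det [r2''; R2'])`; consequently, if
`det [r1''; R1'] ≠ 0` and exactly one of `det [r2'; R2']`, `det [r2''; R2']` is nonzero,
then `R̂` is nonsingular. -/
theorem threeSum_det_factorization
    {α' γ' : Type*} [Fintype α'] [Fintype γ'] [DecidableEq α'] [DecidableEq γ']
    (r1' r1'' : Option α' → ℝ) (r2' r2'' : Option γ' → ℝ)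
    (R1' : Matrix α' (Option α') ℝ) (R2' : Matrix γ' (Option γ') ℝ)
    (u : ℝ) (q : α' → ℝ)
    (hu : u ≠ 0)
    (hrow : r1' + u • r1'' + q ᵥ* R1' = 0) :
    (Matrix.of fun i : Option α' ⊕ Option γ' =>
        match i with
        | Sum.inl none => Sum.elim r1'' r2''
        | Sum.inl (some i') => Sum.elim (R1' i') 0
        | Sum.inr none => Sum.elim r1' r2'
        | Sum.inr (some j') => Sum.elim 0 (R2' j')).det =
      (Matrix.of fun i : Option α' =>
        match i with
        | none => r1''
        | some i' => R1' i').det *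
      ((Matrix.of fun i : Option γ' =>
        match i with
        | none => r2'
        | some j' => R2' j').det +
       u * (Matrix.of fun i : Option γ' =>
        match i with
        | none => r2''
        | some j' => R2' j').det) ∧
    ((Matrix.of fun i : Option α' =>
        match i with
        | none => r1''
        | some i' => R1' i').det ≠ 0 →
      (((Matrix.of fun i : Option γ' =>
          match i with
          | none => r2'
          | some j' => R2' j').det ≠ 0 ∧
        (Matrix.of fun i : Option γ' =>
          match i with
          | none => r2''
          | some j' => R2' j').det = 0) ∨
       ((Matrix.of fun i : Option γ' =>
          match i with
          | none => r2'
          | some j' => R2' j').det = 0 ∧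
        (Matrix.of fun i : Option γ' =>
          match i with
          | none => r2''
          | some j' => R2' j').det ≠ 0)) →
      (Matrix.of fun i : Option α' ⊕ Option γ' =>
        match i with
        | Sum.inl none => Sum.elim r1'' r2''
        | Sum.inl (some i') => Sum.elim (R1' i') 0
        | Sum.inr none => Sum.elim r1' r2'
        | Sum.inr (some j') => Sum.elim 0 (R2' j')).det ≠ 0) := by
  set A : Matrix (Option α' ⊕ Option γ') (Option α' ⊕ Option γ') ℝ :=
    Matrix.of fun i =>
        match i with
        | Sum.inl none => Sum.elim r1'' r2''
        | Sum.inl (some i') => Sum.elim (R1' i') 0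
        | Sum.inr none => Sum.elim r1' r2'
        | Sum.inr (some j') => Sum.elim 0 (R2' j') with hA
  set X : Matrix (Option α') (Option α') ℝ :=
    Matrix.of fun i => match i with | none => r1'' | some i' => R1' i' with hX
  set Z1 : Matrix (Option γ') (Option γ') ℝ :=
    Matrix.of fun i => match i with | none => r2' | some j' => R2' j' with hZ1
  set Z2 : Matrix (Option γ') (Option γ') ℝ :=
    Matrix.of fun i => match i with | none => r2'' | some j' => R2' j' with hZ2
  have key : A.det = X.det * (Z1.det + u * Z2.det) := by
    -- the coefficient function for the row operation
    set c : Option α' ⊕ Option γ' → ℝ := fun k =>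
      match k with
      | Sum.inl none => u
      | Sum.inl (some i) => q i
      | Sum.inr none => 1
      | Sum.inr (some _) => 0 with hc
    have hsum : (∑ k, c k • A k) = Sum.elim (0 : Option α' → ℝ) (r2' + u • r2'') := by
      funext j
      have h0 := congrFun hrow
      simp only [Fintype.sum_apply, Fintype.sum_sum_type, Fintype.sum_option]
      cases j with
      | inl j0 =>
        have := h0 j0
        simp only [Pi.add_apply, Pi.smul_apply, Pi.zero_apply, smul_eq_mul] at this
        simp only [hc, hA, Matrix.of_apply, Pi.smul_apply, Sum.elim_inl, smul_eq_mul,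
          one_mul, zero_mul, Finset.sum_const_zero, add_zero, Sum.elim_inl, Pi.zero_apply]
        rw [show (q ᵥ* R1') j0 = ∑ i, q i * R1' i j0 from by
          simp [Matrix.vecMul, dotProduct]]
          at this
        linarith [this]
      | inr j0 =>
        simp only [hc, hA, Matrix.of_apply, Pi.smul_apply, Sum.elim_inr, smul_eq_mul,
          one_mul, zero_mul, Finset.sum_const_zero, add_zero, Pi.smul_apply,
          Pi.add_apply, Pi.zero_apply, mul_zero]
        ring
    have hdet1 : (A.updateRow (Sum.inr none) (∑ k, c k • A k)).det = A.det := by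
      rw [Matrix.det_updateRow_sum]
      simp [hc]
    have hM : A.updateRow (Sum.inr none) (∑ k, c k • A k) =
        Matrix.fromBlocks X (Matrix.of fun i => match i with
          | none => r2'' | some _ => 0) 0
          (Z1.updateRow none (r2' + u • r2'')) := by
      rw [hsum]
      ext i j
      cases i with
      | inl i0 =>
        cases i0 <;> cases j <;>
          simp [hA, hX, Matrix.fromBlocks, Matrix.updateRow_apply]
      | inr i0 =>
        cases i0 with
        | none =>
          cases j <;> simp [hA, hZ1, Matrix.fromBlocks, Matrix.updateRow_apply]
        | some i1 =>
          cases j <;> simp [hA, hZ1, Matrix.fromBlocks, Matrix.updateRow_apply,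
            Option.some_ne_none]
    have hZdet : (Z1.updateRow none (r2' + u • r2'')).det = Z1.det + u * Z2.det := by
      have h2 : Z1.updateRow none r2'' = Z2 := by
        ext i j
        cases i <;> simp [hZ1, hZ2, Matrix.updateRow_apply]
      have h1 : Z1.updateRow none r2' = Z1 := by
        ext i j
        cases i <;> simp [hZ1, Matrix.updateRow_apply]
      rw [Matrix.det_updateRow_add, Matrix.det_updateRow_smul, h2, h1]
    rw [← hdet1, hM, Matrix.det_fromBlocks_zero₂₁, hZdet]
  refine ⟨key, fun hXne h => ?_⟩
  rw [key]
  rcases h with ⟨h1, h2⟩ | ⟨h1, h2⟩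
  · rw [h2, mul_zero, add_zero]
    exact mul_ne_zero hXne h1
  · rw [h1, zero_add]
    exact mul_ne_zero hXne (mul_ne_zero hu h2)
end
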